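/- arXiv:2407.12457 — 10 statements merged into one kernel-verified Lean document; each statement's English description precedes it below -/
import Mathlib

section
/- The dihedral group D_{2n} is homogeneous (every isomorphism between two subgroups of D_{2n} extends to an automorphism of D_{2n}) if and only if n = 2 or n is odd. -/
/-- A group is homogeneous if every isomorphism between two of its subgroups
extends to an automorphism of the whole group. -/
def IsHomogeneousGroup (G : Type*) [Group G] : Prop :=
  ∀ (H K : Subgroup G) (φ : H ≃* K), ∃ ψ : G ≃* G, ∀ h : H, ψ (h : G) = (φ h : G)

/-!
For odd `n` the rotations of `D_{2n}` are exactly its elements of order different from `2`, so an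
isomorphism `φ : H ≃* K` of subgroups maps rotations to rotations and reflections to reflections.
On the cyclic group of rotations in `H` it is multiplication by a unit `a` of `ZMod n`, since
elements of equal additive order in `ZMod n` differ by a unit; if moreover `φ (sr i) = sr j`, then
`φ` is the restriction of the automorphism `r x ↦ r (a x)`, `sr x ↦ sr (a x + j - a i)`.
`D_4` is a Klein four group, where every bijection fixing `1` is an automorphism.
For even `n > 2`, the central involution `r (n / 2)` and the reflection `sr 0` generate isomorphic
subgroups, but `sr 0` is not central, while automorphisms preserve the center.
-/

open Subgroup

theorem orderOf_coe_mulEquiv_apply {G : Type*} [Group G] {H K : Subgroup G} (φ : H ≃* K)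
    (h : H) : orderOf (φ h : G) = orderOf (h : G) := by
  rw [Subgroup.orderOf_coe, Subgroup.orderOf_coe, MulEquiv.orderOf_eq]

theorem IsHomogeneousGroup.le_center_of_mulEquiv {G : Type*} [Group G]
    (hG : IsHomogeneousGroup G) {H K : Subgroup G} (e : H ≃* K) (hH : H ≤ center G) :
    K ≤ center G := by
  obtain ⟨ψ, hψ⟩ := hG H K e
  intro k hk
  have hψk : ψ (e.symm ⟨k, hk⟩ : G) = k := by rw [hψ, MulEquiv.apply_symm_apply]
  rw [← hψk]
  exact MulEquivClass.apply_mem_center ψ (hH (e.symm ⟨k, hk⟩).2)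

theorem IsKleinFour.isHomogeneousGroup {G : Type*} [Group G] [IsKleinFour G] :
    IsHomogeneousGroup G := by
  classical
  intro H K φ
  have : Finite G := IsKleinFour.instFinite
  let e := φ.toEquiv.extendSubtype
  have he : ∀ h : H, e h = φ h := fun h => Equiv.extendSubtype_apply_of_mem _ _ h.2
  refine ⟨IsKleinFour.mulEquiv e ?_, he⟩
  simpa using he 1

theorem ZMod.exists_unit_mul_eq_of_addOrderOf_eq {n : ℕ} [NeZero n] {g h : ZMod n}
    (hgh : addOrderOf g = addOrderOf h) : ∃ a : (ZMod n)ˣ, a * g = h := by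
  have addOrderOf_unit_mul : ∀ u x : ZMod n, IsUnit u → addOrderOf (u * x) = addOrderOf x :=
    fun u x hu => addOrderOf_eq_addOrderOf_iff.mpr fun k => by
      rw [← mul_smul_comm, hu.mul_right_eq_zero]
  obtain ⟨d, hd, u, hu, rfl⟩ := ZMod.eq_unit_mul_divisor g
  obtain ⟨d', hd', u', hu', rfl⟩ := ZMod.eq_unit_mul_divisor h
  rw [addOrderOf_unit_mul _ _ hu, addOrderOf_unit_mul _ _ hu', ZMod.addOrderOf_coe _ (NeZero.ne n),
    ZMod.addOrderOf_coe _ (NeZero.ne n), Nat.gcd_eq_right hd, Nat.gcd_eq_right hd',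
    Nat.div_eq_iff_eq_of_dvd_dvd (NeZero.ne n) hd hd'] at hgh
  subst hgh
  exact ⟨hu'.unit * hu.unit⁻¹, by
    rw [Units.val_mul, mul_assoc, ← mul_assoc _ u, hu.val_inv_mul, one_mul, IsUnit.unit_spec]⟩

namespace DihedralGroup

variable {n : ℕ}

theorem orderOf_r_eq_addOrderOf (i : ZMod n) : orderOf (r i) = addOrderOf i := by
  rw [← orderOf_ofAdd_eq_addOrderOf]
  exact orderOf_eq_orderOf_iff.mpr fun k => by
    rw [r_pow, ← r_zero, r.injEq, ← ofAdd_nsmul, ofAdd_eq_one, nsmul_eq_mul, mul_comm]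

theorem orderOf_r_ne_two (hn : Odd n) (i : ZMod n) : orderOf (r i) ≠ 2 := by
  rw [orderOf_r_eq_addOrderOf]
  intro h
  exact Nat.not_even_iff_odd.mpr hn (even_iff_two_dvd.mpr (h ▸ addOrderOf_dvd_of_nsmul_eq_zero (by
    rw [nsmul_eq_mul, ZMod.natCast_self, zero_mul])))

theorem r_mem_center {i : ZMod n} (hi : i + i = 0) : r i ∈ center (DihedralGroup n) := by
  rw [mem_center_iff]
  rintro (j | j)
  · rw [r_mul_r, r_mul_r, add_comm]
  · rw [r_mul_sr, sr_mul_r, sub_eq_add_neg, neg_eq_of_add_eq_zero_left hi]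

theorem sr_notMem_center (hn : 2 < n) (i : ZMod n) : sr i ∉ center (DihedralGroup n) := by
  rw [mem_center_iff]
  intro h
  have h2 : ((2 : ℕ) : ZMod n) = 0 := by
    have := h (r 1)
    rw [r_mul_sr, sr_mul_r, sr.injEq] at this
    push_cast
    linear_combination -this
  exact absurd (Nat.le_of_dvd two_pos ((ZMod.natCast_eq_zero_iff 2 n).mp h2)) (by omega)

def affineAut (a : (ZMod n)ˣ) (b : ZMod n) : DihedralGroup n ≃* DihedralGroup n where
  toFun
    | r i => r ((a : ZMod n) * i)
    | sr i => sr ((a : ZMod n) * i + b)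
  invFun
    | r i => r ((a⁻¹ : (ZMod n)ˣ) * i)
    | sr i => sr ((a⁻¹ : (ZMod n)ˣ) * (i - b))
  left_inv := by rintro (i | i) <;> simp
  right_inv := by rintro (i | i) <;> simp
  map_mul' := by rintro (i | i) (j | j) <;> simp <;> ring

@[simp] theorem affineAut_r (a : (ZMod n)ˣ) (b i : ZMod n) :
    affineAut a b (r i) = r ((a : ZMod n) * i) :=
  rfl

@[simp] theorem affineAut_sr (a : (ZMod n)ˣ) (b i : ZMod n) :
    affineAut a b (sr i) = sr ((a : ZMod n) * i + b) :=
  rfl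

section SubgroupMulEquiv

variable {H K : Subgroup (DihedralGroup n)} (φ : H ≃* K)

theorem exists_mulEquiv_apply_r_eq_r (hn : Odd n) {x : ZMod n} (hx : r x ∈ H) :
    ∃ y, (φ ⟨r x, hx⟩ : DihedralGroup n) = r y := by
  cases hφ : (φ ⟨r x, hx⟩ : DihedralGroup n) with
  | r y => exact ⟨y, rfl⟩
  | sr y =>
    have := orderOf_coe_mulEquiv_apply φ ⟨r x, hx⟩
    rw [hφ, orderOf_sr] at this
    exact absurd this.symm (orderOf_r_ne_two hn x)

theorem exists_mulEquiv_apply_sr_eq_sr (hn : Odd n) {x : ZMod n} (hx : sr x ∈ H) :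
    ∃ y, (φ ⟨sr x, hx⟩ : DihedralGroup n) = sr y := by
  cases hφ : (φ ⟨sr x, hx⟩ : DihedralGroup n) with
  | sr y => exact ⟨y, rfl⟩
  | r y =>
    have := orderOf_coe_mulEquiv_apply φ ⟨sr x, hx⟩
    rw [hφ, orderOf_sr] at this
    exact absurd this (orderOf_r_ne_two hn y)

theorem exists_unit_mulEquiv_apply_r (hn : Odd n) : ∃ a : (ZMod n)ˣ,
    ∀ x (hx : r x ∈ H), (φ ⟨r x, hx⟩ : DihedralGroup n) = r ((a : ZMod n) * x) := by
  have : NeZero n := ⟨hn.pos.ne'⟩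
  have : IsCyclic ↥(H ⊓ zpowers (r 1)) := isCyclic_of_le inf_le_right
  obtain ⟨γ, hγ⟩ := (H ⊓ zpowers (r 1)).isCyclic_iff_exists_zpowers_eq_top.mp this
  have hγ' : γ ∈ H ⊓ zpowers (r 1) := hγ ▸ mem_zpowers γ
  obtain ⟨k, rfl⟩ := mem_zpowers_iff.mp hγ'.2
  rw [r_one_zpow] at hγ hγ'
  have hγH := hγ'.1
  obtain ⟨h, hh⟩ := exists_mulEquiv_apply_r_eq_r φ hn hγH
  obtain ⟨a, ha⟩ := ZMod.exists_unit_mul_eq_of_addOrderOf_eq (g := (k : ZMod n)) (h := h) (by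
    rw [← orderOf_r_eq_addOrderOf, ← orderOf_r_eq_addOrderOf, ← hh, orderOf_coe_mulEquiv_apply])
  refine ⟨a, fun x hx => ?_⟩
  have hx' : r x ∈ zpowers (r (k : ZMod n)) :=
    hγ ▸ ⟨hx, x.val, show r 1 ^ (x.val : ℤ) = r x by
      rw [zpow_natCast, r_one_pow, ZMod.natCast_zmod_val]⟩
  obtain ⟨q, hq⟩ := mem_zpowers_iff.mp hx'
  have hxq : (⟨r x, hx⟩ : H) = ⟨r k, hγH⟩ ^ q := Subtype.ext (by simp [hq])
  rw [hxq, map_zpow, SubgroupClass.coe_zpow, hh, r_zpow, ← ha]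
  rw [r_zpow, r.injEq] at hq
  rw [← hq, mul_assoc]

end SubgroupMulEquiv

theorem isHomogeneousGroup_of_odd (hn : Odd n) : IsHomogeneousGroup (DihedralGroup n) := by
  intro H K φ
  obtain ⟨a, ha⟩ := exists_unit_mulEquiv_apply_r φ hn
  by_cases hsr : ∃ i, sr i ∈ H
  · obtain ⟨i, hi⟩ := hsr
    obtain ⟨j, hj⟩ := exists_mulEquiv_apply_sr_eq_sr φ hn hi
    refine ⟨affineAut a (j - (a : ZMod n) * i), ?_⟩
    rintro ⟨x | x, hx⟩
    · exact (ha x hx).symm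
    · have hxi : r (x - i) ∈ H := by simpa [sr_mul_sr] using H.mul_mem hi hx
      have hsplit : (⟨sr x, hx⟩ : H) = ⟨sr i, hi⟩ * ⟨r (x - i), hxi⟩ :=
        Subtype.ext (by simp [sr_mul_r])
      have hφx : (φ ⟨sr x, hx⟩ : DihedralGroup n) = sr (j + (a : ZMod n) * (x - i)) := by
        rw [hsplit, map_mul, MulMemClass.coe_mul, hj, ha _ hxi, sr_mul_r]
      rw [hφx]
      change sr ((a : ZMod n) * x + (j - (a : ZMod n) * i)) = _
      congr 1
      ring
  · refine ⟨affineAut a 0, ?_⟩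
    rintro ⟨x | x, hx⟩
    · exact (ha x hx).symm
    · exact absurd ⟨x, hx⟩ hsr

theorem not_isHomogeneousGroup_of_even (hn : Even n) (h2 : 2 < n) :
    ¬IsHomogeneousGroup (DihedralGroup n) := by
  obtain ⟨k, rfl⟩ := hn
  intro hG
  have hk : (k : ZMod (k + k)) + k = 0 := by rw [← Nat.cast_add, ZMod.natCast_self]
  have hk0 : (k : ZMod (k + k)) ≠ 0 := by
    rw [Ne, ZMod.natCast_eq_zero_iff]
    exact fun h => absurd (Nat.le_of_dvd (by omega) h) (by omega)
  have hcard : Nat.card (zpowers (r (k : ZMod (k + k)))) = 2 := by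
    rw [Nat.card_zpowers, orderOf_r_eq_addOrderOf]
    exact addOrderOf_eq_prime (by rw [two_nsmul, hk]) hk0
  let e := mulEquivOfPrimeCardEq hcard ((Nat.card_zpowers _).trans (orderOf_sr (0 : ZMod (k + k))))
  exact sr_notMem_center h2 0
    (hG.le_center_of_mulEquiv e (zpowers_le.mpr (r_mem_center hk)) (mem_zpowers _))

end DihedralGroup

/-- The dihedral group `D_{2n}` is homogeneous if and only if `n = 2` or `n` is odd. -/
theorem dihedral_homogeneous_iff (n : ℕ) (hn : 0 < n) :
    IsHomogeneousGroup (DihedralGroup n) ↔ n = 2 ∨ Odd n := by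
  constructor
  · intro hG
    by_contra! h
    have heven : Even n := Nat.not_odd_iff_even.mp h.2
    have h2 : 2 < n := by rcases heven with ⟨k, rfl⟩; omega
    exact DihedralGroup.not_isHomogeneousGroup_of_even heven h2 hG
  · rintro (rfl | hodd)
    · exact IsKleinFour.isHomogeneousGroup
    · exact DihedralGroup.isHomogeneousGroup_of_odd hodd
end

section
/- Every finite cyclic group is homogeneous: for any finite cyclic group G and any isomorphism φ : H → K between subgroups H, K ≤ G, there exists an automorphism of G extending φ. -/
open Subgroup

/-- In a finite cyclic group, any element whose order divides the order of `g`
lies in the cyclic subgroup generated by `g`. -/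
lemma mem_zpowers_of_orderOf_dvd_aux {G : Type*} [Group G] [Fintype G] (hG : IsCyclic G)
    {g x : G} (h : orderOf x ∣ orderOf g) : x ∈ Subgroup.zpowers g := by
  classical
  set d := orderOf g with hd
  have hd0 : 0 < d := orderOf_pos g
  have hsub : ((zpowers g : Set G).toFinset) ⊆
      Finset.filter (fun a : G => a ^ d = 1) Finset.univ := by
    intro y hy
    rw [Set.mem_toFinset] at hy
    obtain ⟨m, rfl⟩ := hy
    simp only [Finset.mem_filter, Finset.mem_univ, true_and]
    rw [← zpow_natCast, ← zpow_mul, mul_comm, zpow_mul, zpow_natCast, pow_orderOf_eq_one,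
      one_zpow]
  have hle : (Finset.filter (fun a : G => a ^ d = 1) Finset.univ).card ≤ d := by
    have h2 := IsCyclic.card_pow_eq_one_le (α := G) hd0
    convert h2 using 2
  have hcard : d ≤ ((zpowers g : Set G).toFinset).card := by
    simp only [Set.toFinset_card, SetLike.coe_sort_coe]
    rw [Fintype.card_zpowers]
  have heq : ((zpowers g : Set G).toFinset) =
      Finset.filter (fun a : G => a ^ d = 1) Finset.univ :=
    Finset.eq_of_subset_of_card_le hsub (le_trans hle hcard)
  have hx : x ∈ Finset.filter (fun a : G => a ^ d = 1) Finset.univ := by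
    simp only [Finset.mem_filter, Finset.mem_univ, true_and]
    exact orderOf_dvd_iff_pow_eq_one.mp h
  rw [← heq, Set.mem_toFinset] at hx
  exact hx

/-- Every finite cyclic group is homogeneous: any isomorphism `φ : H → K` between
subgroups `H, K` of a finite cyclic group `G` extends to an automorphism of `G`. -/
theorem cyclic_homogeneous (G : Type*) [Group G] [Fintype G] (hG : IsCyclic G)
    (H K : Subgroup G) (φ : H ≃* K) :
    ∃ ψ : G ≃* G, ∀ h : H, ψ (h : G) = (φ h : G) := by
  classical
  haveI := hG
  obtain ⟨g, hg⟩ := IsCyclic.exists_generator (α := H)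
  set d := orderOf (g : G) with hd
  have hd0 : 0 < d := orderOf_pos _
  -- order of (φ g : G) equals d
  have horder : orderOf ((φ g : K) : G) = d := by
    rw [Subgroup.orderOf_coe, φ.orderOf_eq, hd, ← Subgroup.orderOf_coe]
  -- φ g lies in zpowers (g : G)
  have hmem : ((φ g : K) : G) ∈ zpowers (g : G) :=
    mem_zpowers_of_orderOf_dvd_aux hG (horder ▸ dvd_refl d)
  obtain ⟨j, hj⟩ : ∃ j : ℕ, (g : G) ^ j = ((φ g : K) : G) :=
    (Submonoid.mem_powers_iff _ _).mp (mem_powers_iff_mem_zpowers.mpr hmem)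
  -- gcd d j = 1
  have hcop : Nat.Coprime d j := by
    have h1 : orderOf ((g : G) ^ j) = d := by rw [hj, horder]
    rw [orderOf_pow, ← hd] at h1
    rcases Nat.div_eq_self.mp h1 with h | h
    · omega
    · exact h
  -- lift j to k coprime to n := card G
  set n := Fintype.card G with hn
  haveI : NeZero n := ⟨Fintype.card_ne_zero⟩
  have hdn : d ∣ n := orderOf_dvd_card
  obtain ⟨v, hv⟩ := ZMod.unitsMap_surjective hdn (ZMod.unitOfCoprime j hcop.symm)
  set k := (v : ZMod n).val with hk
  have hkcop : Nat.Coprime k n := ZMod.val_coe_unit_coprime v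
  have hkj : k ≡ j [MOD d] := by
    have h1 : ((k : ℕ) : ZMod d) = ((j : ℕ) : ZMod d) := by
      have h2 := congrArg (fun u : (ZMod d)ˣ => (u : ZMod d)) hv
      simp only [ZMod.unitsMap, Units.coe_map, ZMod.coe_unitOfCoprime] at h2
      rw [hk, ZMod.natCast_val]
      exact h2
    exact (ZMod.natCast_eq_natCast_iff _ _ _).mp h1
  -- the automorphism x ↦ x ^ k
  have hcard : (Nat.card G).Coprime k := by
    rw [Nat.card_eq_fintype_card, ← hn]
    exact hkcop.symm
  refine ⟨{ toEquiv := powCoprime hcard,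
            map_mul' := fun a b => by
              letI := hG.commGroup
              exact mul_pow a b k }, ?_⟩
  intro h
  obtain ⟨m, hm⟩ := hg h
  have hmc : ((g : G)) ^ m = (h : G) := by
    rw [← hm]; push_cast; rfl
  have hgk : (g : G) ^ k = ((φ g : K) : G) := by
    rw [← hj, pow_eq_pow_iff_modEq]
    exact hkj
  have hφ : (φ h : G) = ((φ g : K) : G) ^ m := by
    rw [← hm, map_zpow]; push_cast; rfl
  show ((h : G)) ^ k = (φ h : G)
  calc ((h : G)) ^ k = ((g : G) ^ m) ^ (k : ℤ) := by rw [zpow_natCast, hmc]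
    _ = ((g : G) ^ (k : ℤ)) ^ m := by rw [← zpow_mul, ← zpow_mul, mul_comm]
    _ = ((g : G) ^ k) ^ m := by rw [zpow_natCast]
    _ = ((φ g : K) : G) ^ m := by rw [hgk]
    _ = (φ h : G) := hφ.symm
end

section
/- Let Γ = Cay(G, S) be a Cayley digraph of a finite group G such that R(G) is normal in Aut(Γ). Then Γ is a CI-digraph if and only if R(G) is the unique regular subgroup of Aut(Γ) isomorphic to G. -/
/-- The automorphism group of the Cayley digraph `Cay(G,S)`, as a subgroup of `Sym(G)`. -/
def cayleyAut (G : Type*) [Group G] (S : Set G) : Subgroup (Equiv.Perm G) where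
  carrier := {f | ∀ x y : G, y * x⁻¹ ∈ S ↔ f y * (f x)⁻¹ ∈ S}
  one_mem' := by intro x y; rfl
  mul_mem' := by
    intro f g hf hg x y
    exact (hg x y).trans (hf (g x) (g y))
  inv_mem' := by
    intro f hf x y
    have h := hf (f⁻¹ x) (f⁻¹ y)
    simpa using h.symm

/-- The right regular representation of `G` in `Sym(G)`, as a homomorphism. -/
def rightRegHom (G : Type*) [Group G] : G →* Equiv.Perm G where
  toFun g := Equiv.mulRight g⁻¹
  map_one' := by ext x; simp
  map_mul' a b := by ext x; simp [mul_assoc]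

/-- The subgroup `R(G) ≤ Sym(G)` of all right translations. -/
def rightRegRep (G : Type*) [Group G] : Subgroup (Equiv.Perm G) := (rightRegHom G).range

/-- `S` is a CI-subset of `G` (equivalently `Cay(G,S)` is a CI-digraph): whenever
`Cay(G,S) ≅ Cay(G,T)` for `T ⊆ G \ {1}`, some automorphism of `G` maps `S` to `T`. -/
def IsCISubset (G : Type*) [Group G] (S : Set G) : Prop :=
  ∀ T : Set G, (1 : G) ∉ T →
    (∃ e : Equiv.Perm G, ∀ x y : G, y * x⁻¹ ∈ S ↔ e y * (e x)⁻¹ ∈ T) →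
    ∃ σ : G ≃* G, ⇑σ '' S = T

/-! A regular subgroup `X ≅ G` of `Sym(G)` is conjugate to the right regular representation:
`X = e⁻¹ R(G) e`. If moreover `X ≤ Aut(Γ)`, then `e` carries `Γ` to a digraph invariant under
`R(G)`, i.e. to some `Cay(G,T)`. The CI property yields `σ ∈ Aut(G)` with `S^σ = T`, so
`σ⁻¹ e ∈ Aut(Γ)`, and normality of `R(G)` in `Aut(Γ)` gives `X ≤ R(G)`, whence `X = R(G)`.

Conversely, an isomorphism `e : Cay(G,S) ≅ Cay(G,T)` makes `e⁻¹ R(G) e` a regular subgroup of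
`Aut(Γ)` isomorphic to `G`. If it is `R(G)`, then `e` normalizes `R(G)`, and a permutation
normalizing `R(G)` has the form `x ↦ σ x * e 1` with `σ ∈ Aut(G)`; this `σ` maps `S` onto `T`. -/

section

open Equiv Subgroup

variable {α : Type*}

def IsRegularPermGroup (X : Subgroup (Perm α)) : Prop :=
  ∀ x y : α, ∃! f : X, (f : Perm α) x = y

variable {X Y : Subgroup (Perm α)}

theorem IsRegularPermGroup.eq_of_le [Nonempty α] (hX : IsRegularPermGroup X)
    (hY : IsRegularPermGroup Y) (hXY : X ≤ Y) : X = Y := by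
  refine le_antisymm hXY fun g hg => ?_
  let a : α := Classical.arbitrary α
  obtain ⟨f, hf, -⟩ := hX a (g a)
  have : (⟨f, hXY f.2⟩ : Y) = ⟨g, hg⟩ := (hY a (g a)).unique hf rfl
  obtain rfl : (f : Perm α) = g := congrArg Subtype.val this
  exact f.2

theorem IsRegularPermGroup.comap_conj (hX : IsRegularPermGroup X) (e : Perm α) :
    IsRegularPermGroup (X.comap (MulAut.conj e).toMonoidHom) := by
  intro x y
  obtain ⟨h, hh, h_unique⟩ := hX (e x) (e y)
  refine ⟨⟨e⁻¹ * h * e, by simp [mul_assoc]⟩, by simp [hh], ?_⟩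
  rintro ⟨f, hf⟩ hfx
  have : (⟨e * f * e⁻¹, by simpa using hf⟩ : X) = h := h_unique _ (by simp [hfx])
  ext1
  simp [← this, mul_assoc]

/-- The bijection is the orbit map `f ↦ f a`, followed by `θ` and inversion. -/
theorem IsRegularPermGroup.exists_equiv_apply_eq_mul_inv {H : Type*} [Group H]
    (hX : IsRegularPermGroup X) (θ : X ≃* H) (a : α) :
    ∃ e : α ≃ H, ∀ (f : X) (x : α), e ((f : Perm α) x) = e x * (θ f)⁻¹ := by
  let φ : X ≃ α := Equiv.ofBijective (fun f : X => (f : Perm α) a)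
    ((Function.bijective_iff_existsUnique _).2 (hX a))
  have hφ (f : X) (x : α) : φ.symm ((f : Perm α) x) = f * φ.symm x :=
    φ.symm_apply_eq.2 (congrArg (f : Perm α) (φ.apply_symm_apply x)).symm
  refine ⟨φ.symm.trans (θ.toEquiv.trans (Equiv.inv H)), fun f x => ?_⟩
  simp [hφ]

theorem mem_comap_conj {K : Subgroup (Perm α)} {e f : Perm α} :
    f ∈ K.comap (MulAut.conj e).toMonoidHom ↔ e * f * e⁻¹ ∈ K := Iff.rfl

end

section

open Equiv Subgroup

variable {G : Type*} [Group G]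

theorem mem_rightRegRep {f : Perm G} : f ∈ rightRegRep G ↔ ∃ g : G, Equiv.mulRight g = f := by
  rw [rightRegRep, MonoidHom.mem_range]
  constructor
  · rintro ⟨g, rfl⟩; exact ⟨g⁻¹, rfl⟩
  · rintro ⟨g, rfl⟩; exact ⟨g⁻¹, by simp [rightRegHom]⟩

theorem mulRight_mem_rightRegRep (g : G) : Equiv.mulRight g ∈ rightRegRep G :=
  mem_rightRegRep.2 ⟨g, rfl⟩

theorem rightRegHom_injective : Function.Injective (rightRegHom G) := fun a b h => by
  simpa [rightRegHom] using congrArg (fun p : Perm G => p 1) h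

theorem isRegularPermGroup_rightRegRep : IsRegularPermGroup (rightRegRep G) := by
  intro x y
  refine ⟨⟨_, mulRight_mem_rightRegRep (x⁻¹ * y)⟩, by simp, ?_⟩
  rintro ⟨f, hf⟩ hfx
  obtain ⟨g, rfl⟩ := mem_rightRegRep.1 hf
  obtain rfl : g = x⁻¹ * y := by simp [← hfx]
  rfl

theorem nonempty_comap_conj_rightRegRep_mulEquiv (e : Perm G) :
    Nonempty ((rightRegRep G).comap (MulAut.conj e).toMonoidHom ≃* G) := by
  rw [comap_equiv_eq_map_symm']
  exact ⟨((rightRegRep G).equivMapOfInjective _ (MulAut.conj e).symm.injective).symm.trans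
    (MonoidHom.ofInjective rightRegHom_injective).symm⟩

theorem IsRegularPermGroup.exists_eq_comap_conj_rightRegRep {X : Subgroup (Perm G)}
    (hX : IsRegularPermGroup X) (θ : X ≃* G) :
    ∃ e : Perm G, X = (rightRegRep G).comap (MulAut.conj e).toMonoidHom := by
  obtain ⟨e, he⟩ := hX.exists_equiv_apply_eq_mul_inv θ 1
  refine ⟨e, hX.eq_of_le (isRegularPermGroup_rightRegRep.comap_conj e) fun f hf => ?_⟩
  rw [mem_comap_conj, mem_rightRegRep]
  refine ⟨(θ ⟨f, hf⟩)⁻¹, Equiv.ext fun x => ?_⟩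
  simpa using (he ⟨f, hf⟩ (e⁻¹ x)).symm

theorem mulEquiv_conj_mem_rightRegRep (σ : G ≃* G) {f : Perm G} (hf : f ∈ rightRegRep G) :
    σ.toEquiv * f * σ.toEquiv⁻¹ ∈ rightRegRep G := by
  obtain ⟨g, rfl⟩ := mem_rightRegRep.1 hf
  exact mem_rightRegRep.2 ⟨σ g, Equiv.ext fun x => by simp⟩

theorem exists_mulEquiv_of_rightRegRep_le_comap_conj {e : Perm G}
    (he : rightRegRep G ≤ (rightRegRep G).comap (MulAut.conj e).toMonoidHom) :
    ∃ σ : G ≃* G, ∀ x, e x = σ x * e 1 := by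
  have hmul (x g : G) : e (x * g) = e x * (e 1)⁻¹ * e g := by
    obtain ⟨h, hh⟩ := mem_rightRegRep.1 (he (mulRight_mem_rightRegRep g))
    have key (y : G) : e (y * g) = e y * h := by
      simpa using (congrArg (fun p : Perm G => p (e y)) hh).symm
    have hg : e g = e 1 * h := by simpa using key 1
    rw [key, hg]
    group
  refine ⟨{ toEquiv := e.trans (Equiv.mulRight (e 1)⁻¹), map_mul' := fun x y => ?_ },
    fun x => by simp⟩
  show e (x * y) * (e 1)⁻¹ = e x * (e 1)⁻¹ * (e y * (e 1)⁻¹)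
  rw [hmul]
  group

def IsCayleyIso (S T : Set G) (e : Perm G) : Prop :=
  ∀ x y : G, y * x⁻¹ ∈ S ↔ e y * (e x)⁻¹ ∈ T

variable {S T U : Set G} {e e' : Perm G}

theorem mem_cayleyAut {f : Perm G} : f ∈ cayleyAut G S ↔ IsCayleyIso S S f := Iff.rfl

theorem IsCayleyIso.mul (he : IsCayleyIso T U e) (he' : IsCayleyIso S T e') :
    IsCayleyIso S U (e * e') :=
  fun x y => (he' x y).trans (he _ _)

theorem IsCayleyIso.inv (he : IsCayleyIso S T e) : IsCayleyIso T S e⁻¹ :=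
  fun x y => by simpa using (he (e⁻¹ x) (e⁻¹ y)).symm

theorem isCayleyIso_mulRight (g : G) : IsCayleyIso T T (Equiv.mulRight g) := by
  intro x y
  simp [mul_assoc]

theorem isCayleyIso_mulEquiv (σ : G ≃* G) : IsCayleyIso S (σ '' S) σ.toEquiv := by
  intro x y
  simp [← map_inv, ← map_mul, σ.injective.mem_set_image]

theorem rightRegRep_le_cayleyAut : rightRegRep G ≤ cayleyAut G T := fun f hf => by
  obtain ⟨g, rfl⟩ := mem_rightRegRep.1 hf
  exact isCayleyIso_mulRight g

theorem IsCayleyIso.comap_conj_cayleyAut_le (he : IsCayleyIso S T e) :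
    (cayleyAut G T).comap (MulAut.conj e).toMonoidHom ≤ cayleyAut G S := fun f hf => by
  have hconj : IsCayleyIso T T (e * f * e⁻¹) := mem_comap_conj.1 hf
  rw [mem_cayleyAut]
  simpa [mul_assoc] using he.inv.mul (hconj.mul he)

/-- The image of `Cay(G,S)` under `e` is invariant under `R(G)`, hence a Cayley digraph, whose
connection set is the out-neighbourhood of `1 = e (e⁻¹ 1)`. -/
theorem isCayleyIso_of_comap_conj_rightRegRep_le
    (h : (rightRegRep G).comap (MulAut.conj e).toMonoidHom ≤ cayleyAut G S) :
    IsCayleyIso S {t | e⁻¹ t * (e⁻¹ 1)⁻¹ ∈ S} e := by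
  intro x y
  have ha :
      e⁻¹ * Equiv.mulRight (e x) * e ∈ (rightRegRep G).comap (MulAut.conj e).toMonoidHom := by
    rw [mem_comap_conj]
    simpa [mul_assoc] using mulRight_mem_rightRegRep (e x)
  have := (h ha (e⁻¹ 1) (e⁻¹ (e y * (e x)⁻¹))).symm
  simp only [Perm.mul_apply, Perm.coe_inv, apply_symm_apply, coe_mulRight, inv_mul_cancel_right,
    one_mul, symm_apply_apply] at this
  exact this

theorem IsCayleyIso.exists_mulEquiv_image_eq (he : IsCayleyIso S T e)
    (hnorm : rightRegRep G ≤ (rightRegRep G).comap (MulAut.conj e).toMonoidHom) :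
    ∃ σ : G ≃* G, σ '' S = T := by
  obtain ⟨σ, hσ⟩ := exists_mulEquiv_of_rightRegRep_le_comap_conj hnorm
  refine ⟨σ, ?_⟩
  have hS : S = σ ⁻¹' T := Set.ext fun s => by
    have := he 1 s
    rwa [inv_one, mul_one, hσ s, mul_inv_cancel_right] at this
  rw [hS, Set.image_preimage_eq T σ.surjective]

theorem IsCISubset.eq_rightRegRep (hCI : IsCISubset G S) (hS : (1 : G) ∉ S)
    (hnormal : ∀ f ∈ cayleyAut G S, ∀ g : G, f * Equiv.mulRight g * f⁻¹ ∈ rightRegRep G)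
    {X : Subgroup (Perm G)} (hXS : X ≤ cayleyAut G S) (hX : IsRegularPermGroup X) (θ : X ≃* G) :
    X = rightRegRep G := by
  obtain ⟨e, rfl⟩ := hX.exists_eq_comap_conj_rightRegRep θ
  have he := isCayleyIso_of_comap_conj_rightRegRep_le hXS
  obtain ⟨σ, hσ⟩ := hCI _ (by rwa [Set.mem_ofPred_eq, mul_inv_cancel]) ⟨e, he⟩
  have hα : σ.toEquiv⁻¹ * e ∈ cayleyAut G S := (hσ ▸ (isCayleyIso_mulEquiv σ).inv).mul he
  refine hX.eq_of_le isRegularPermGroup_rightRegRep fun f hf => ?_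
  obtain ⟨g, hg⟩ := mem_rightRegRep.1 (mulEquiv_conj_mem_rightRegRep σ.symm hf)
  have hf_eq : f = (σ.toEquiv⁻¹ * e)⁻¹ * Equiv.mulRight g * (σ.toEquiv⁻¹ * e)⁻¹⁻¹ := by
    rw [hg]; ext x; simp
  exact hf_eq ▸ hnormal _ (inv_mem hα) g

theorem isCISubset_of_forall_isRegularPermGroup_eq
    (huniq : ∀ X : Subgroup (Perm G), X ≤ cayleyAut G S → IsRegularPermGroup X →
      Nonempty (X ≃* G) → X = rightRegRep G) :
    IsCISubset G S := by
  rintro T - ⟨e, he : IsCayleyIso S T e⟩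
  have hX := huniq _ ((comap_mono rightRegRep_le_cayleyAut).trans he.comap_conj_cayleyAut_le)
    (isRegularPermGroup_rightRegRep.comap_conj e) (nonempty_comap_conj_rightRegRep_mulEquiv e)
  exact he.exists_mulEquiv_image_eq hX.ge

end

theorem normal_cayley_CI_iff_unique_regular_general (G : Type*) [Group G]
    (S : Set G) (hS : (1 : G) ∉ S)
    (hnormal : ∀ f ∈ cayleyAut G S, ∀ g : G, f * Equiv.mulRight g * f⁻¹ ∈ rightRegRep G) :
    IsCISubset G S ↔
      ∀ X : Subgroup (Equiv.Perm G), X ≤ cayleyAut G S →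
        (∀ x y : G, ∃! f : X, (f : Equiv.Perm G) x = y) →
        Nonempty (X ≃* G) → X = rightRegRep G :=
  ⟨fun hCI _ hXS hX ⟨θ⟩ => hCI.eq_rightRegRep hS hnormal hXS hX θ,
    isCISubset_of_forall_isRegularPermGroup_eq⟩

/-- Let `Γ = Cay(G,S)` be a Cayley digraph of a finite group `G` such that `R(G)` is
normal in `Aut(Γ)`. Then `Γ` is a CI-digraph if and only if `R(G)` is the unique
regular subgroup of `Aut(Γ)` isomorphic to `G`. -/
theorem normal_cayley_CI_iff_unique_regular (G : Type*) [Group G] [Fintype G]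
    (S : Set G) (hS : (1 : G) ∉ S)
    (hnormal : ∀ f ∈ cayleyAut G S, ∀ g : G, f * Equiv.mulRight g * f⁻¹ ∈ rightRegRep G) :
    IsCISubset G S ↔
      ∀ X : Subgroup (Equiv.Perm G), X ≤ cayleyAut G S →
        (∀ x y : G, ∃! f : X, (f : Equiv.Perm G) x = y) →
        Nonempty (X ≃* G) → X = rightRegRep G :=
  normal_cayley_CI_iff_unique_regular_general G S hS hnormal
end

section
/- Let n ≥ 3 be odd and S = {a, a^{-1}, a^2 b, b} ⊆ D_{2n}. Then the Cayley graph Γ = Cay(D_{2n}, S) is connected, and with H = ⟨ab⟩, the partition B = {H a^i : 0 ≤ i ≤ n-1} of the vertex set satisfies: Γ is isomorphic to the lexicographic product Γ_B[2K_1], where the quotient graph Γ_B is a cycle of length n. -/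
open DihedralGroup

/-- The Cayley graph of `D_{2n}` with connection set `S` (for symmetric `S` with
`1 ∉ S` this has `x ~ y` iff `y * x⁻¹ ∈ S`). -/
def cayleyGraph (n : ℕ) (S : Set (DihedralGroup n)) : SimpleGraph (DihedralGroup n) :=
  SimpleGraph.fromRel (fun x y => y * x⁻¹ ∈ S)

/-- `S = {a, a⁻¹, a²b, b}`, where `a = r 1` and `b = sr 0`. -/
def stdS (n : ℕ) : Set (DihedralGroup n) :=
  {DihedralGroup.r 1, (DihedralGroup.r 1)⁻¹,
    DihedralGroup.r 1 ^ 2 * DihedralGroup.sr 0, DihedralGroup.sr 0}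

/-- The block `H aⁱ = {aⁱ, ab·aⁱ}` where `H = ⟨ab⟩`. -/
def block (n : ℕ) (i : ZMod n) : Set (DihedralGroup n) :=
  {DihedralGroup.r i, DihedralGroup.r 1 * DihedralGroup.sr 0 * DihedralGroup.r i}

/-- The quotient graph of `Γ = Cay(D_{2n}, S)` with respect to the partition
`B = {H aⁱ : i}`, with blocks indexed by `i ∈ ZMod n`. -/
def quotientGraph (n : ℕ) : SimpleGraph (ZMod n) :=
  SimpleGraph.fromRel (fun i j => ∃ x ∈ block n i, ∃ y ∈ block n j, (cayleyGraph n (stdS n)).Adj x y)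

/-!
Index the blocks by `blockIndex : r i ↦ i, sr j ↦ j + 1`, so that `H aⁱ` is the fibre over `i`.
Each of `a, a⁻¹, a²b, b` moves the block index by `±1`, and conversely `y x⁻¹ ∈ S` as soon as
the block indices of `x` and `y` differ by `±1`, whatever the cosets. Hence `Γ` is the pullback
of the circulant graph `Cay(ℤ/n, {±1}) = Cₙ` along the block index: this says at once that
`Γ_B = Cₙ` and that `Γ ≅ Cₙ[2K₁]`, and connectivity lifts from `Cₙ` along the surjective block
index.
-/

open SimpleGraph Function

namespace SimpleGraph

variable {V W : Type*} {G : SimpleGraph W} {f : V → W}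

/-- Walks lift along `f` with arbitrary endpoints in the fibres; two points of one fibre are
joined through a preimage of any neighbour. -/
theorem Preconnected.comap_of_surjective [Nontrivial W] (hG : G.Preconnected)
    (hf : Surjective f) : (G.comap f).Preconnected := by
  have lift : ∀ a b, G.Reachable a b → ∀ x y, f x = a → f y = b → (G.comap f).Reachable x y := by
    intro a b hab
    rw [reachable_iff_reflTransGen] at hab
    induction hab with
    | refl =>
      rintro x y hx rfl
      obtain ⟨c, hc⟩ := hG.exists_adj_of_nontrivial (f y)
      obtain ⟨z, rfl⟩ := hf c
      have hxz : (G.comap f).Adj x z := by rwa [comap_adj, hx]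
      exact hxz.reachable.trans (Adj.reachable hc.symm)
    | @tail c _ _ hcb ih =>
      rintro x y rfl rfl
      obtain ⟨z, rfl⟩ := hf c
      exact (ih x z rfl rfl).trans (Adj.reachable hcb)
  exact fun x y => lift _ _ (hG (f x) (f y)) x y rfl rfl

theorem Connected.comap_of_surjective [Nontrivial W] (hG : G.Connected) (hf : Surjective f) :
    (G.comap f).Connected :=
  haveI : Nonempty V := hG.nonempty.map fun w => (hf w).choose
  ⟨hG.preconnected.comap_of_surjective hf⟩

theorem circulantGraph_zmod_one_connected (n : ℕ) [NeZero n] :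
    (circulantGraph ({1} : Set (ZMod n))).Connected := by
  obtain ⟨m, rfl⟩ := Nat.exists_eq_succ_of_ne_zero (NeZero.ne n)
  exact cycleGraph_eq_circulantGraph m ▸ cycleGraph_connected

end SimpleGraph

namespace DihedralGroup

variable {n : ℕ}

/-- The index `i` of the block `H aⁱ` containing `x`. -/
def blockIndex : DihedralGroup n → ZMod n
  | r i => i
  | sr j => j + 1

theorem blockIndex_surjective : Surjective (blockIndex : DihedralGroup n → ZMod n) :=
  fun i => ⟨r i, rfl⟩

theorem mem_block_iff {x : DihedralGroup n} {i : ZMod n} : x ∈ block n i ↔ blockIndex x = i := by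
  rcases x with j | j <;>
    simp only [block, r_mul_sr, sr_mul_r, Set.mem_insert_iff, Set.mem_singleton_iff, r.injEq,
      sr.injEq, reduceCtorEq, or_false, false_or, blockIndex]
  grind

theorem mem_stdS_iff {z : DihedralGroup n} :
    z ∈ stdS n ↔ z = r 1 ∨ z = r (-1) ∨ z = sr (-2) ∨ z = sr 0 := by
  simp [stdS, r_pow]

theorem mul_inv_mem_stdS_iff (x y : DihedralGroup n) :
    y * x⁻¹ ∈ stdS n ↔ blockIndex x - blockIndex y = 1 ∨ blockIndex y - blockIndex x = 1 := by
  rcases x with i | i <;> rcases y with j | j <;>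
    simp only [mem_stdS_iff, inv_r, inv_sr, r_mul_r, r_mul_sr, sr_mul_r, sr_mul_sr, r.injEq,
      sr.injEq, reduceCtorEq, or_false, false_or, blockIndex] <;>
    grind

def blowUpEquiv : DihedralGroup n ≃ ZMod n × Fin 2 where
  toFun
    | r i => (i, 0)
    | sr j => (j + 1, 1)
  invFun p := if p.2 = 0 then r p.1 else sr (p.1 - 1)
  left_inv := by rintro (i | j) <;> simp
  right_inv := by rintro ⟨i, s⟩; fin_cases s <;> simp

theorem fst_blowUpEquiv (x : DihedralGroup n) : (blowUpEquiv x).1 = blockIndex x := by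
  cases x <;> rfl

variable [Fact (1 < n)]

theorem cayleyGraph_stdS_eq_comap :
    cayleyGraph n (stdS n) = (circulantGraph {1}).comap blockIndex := by
  ext x y
  simp only [cayleyGraph, fromRel_adj, comap_adj, circulantGraph_adj, Set.mem_singleton_iff,
    mul_inv_mem_stdS_iff, or_comm (a := blockIndex y - blockIndex x = 1), or_self]
  refine ⟨fun ⟨_, h⟩ => ⟨?_, h⟩, fun ⟨hne, h⟩ => ⟨ne_of_apply_ne _ hne, h⟩⟩
  rcases h with h | h <;> intro he <;> simp [he] at h

theorem quotientGraph_eq_circulantGraph : quotientGraph n = circulantGraph {1} := by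
  have hrel : ∀ i j, (∃ x ∈ block n i, ∃ y ∈ block n j, (cayleyGraph n (stdS n)).Adj x y) ↔
      (circulantGraph {1}).Adj i j := by
    intro i j
    simp only [mem_block_iff, cayleyGraph_stdS_eq_comap, comap_adj]
    exact ⟨fun ⟨_, hx, _, hy, h⟩ => hx ▸ hy ▸ h, fun h => ⟨r i, rfl, r j, rfl, h⟩⟩
  ext i j
  rw [quotientGraph, fromRel_adj, hrel, hrel, or_iff_left_of_imp Adj.symm,
    and_iff_right_of_imp Adj.ne]

theorem cayleyGraph_stdS_connected : (cayleyGraph n (stdS n)).Connected := by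
  rw [cayleyGraph_stdS_eq_comap]
  exact (circulantGraph_zmod_one_connected n).comap_of_surjective blockIndex_surjective

theorem nonempty_quotientGraph_iso_cycleGraph : Nonempty (quotientGraph n ≃g cycleGraph n) := by
  obtain ⟨m, rfl⟩ := Nat.exists_eq_succ_of_ne_zero (NeZero.ne n)
  rw [quotientGraph_eq_circulantGraph, cycleGraph_eq_circulantGraph]
  exact ⟨Iso.refl⟩

def cayleyGraphIsoLex :
    cayleyGraph n (stdS n) ≃g (quotientGraph n).comap (Prod.fst : ZMod n × Fin 2 → ZMod n) where
  toEquiv := blowUpEquiv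
  map_rel_iff' {x y} := by
    rw [quotientGraph_eq_circulantGraph, cayleyGraph_stdS_eq_comap]
    simp only [comap_adj, fst_blowUpEquiv]

end DihedralGroup

theorem cayley_dihedral_lex_structure_general (n : ℕ) (hn : 3 ≤ n) :
    (cayleyGraph n (stdS n)).Connected ∧
    Nonempty (quotientGraph n ≃g SimpleGraph.cycleGraph n) ∧
    Nonempty (cayleyGraph n (stdS n) ≃g
      (quotientGraph n).comap (Prod.fst : ZMod n × Fin 2 → ZMod n)) := by
  have : Fact (1 < n) := ⟨by omega⟩
  exact ⟨cayleyGraph_stdS_connected, nonempty_quotientGraph_iso_cycleGraph, ⟨cayleyGraphIsoLex⟩⟩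

/-- Let `n ≥ 3` be odd and `S = {a, a⁻¹, a²b, b} ⊆ D_{2n}`. Then `Γ = Cay(D_{2n}, S)`
is connected; the quotient graph `Γ_B` with respect to the partition
`B = {⟨ab⟩aⁱ : 0 ≤ i ≤ n-1}` is a cycle of length `n`; and `Γ` is isomorphic to the
lexicographic product `Γ_B[2K₁]` (each vertex of `Γ_B` blown up into two independent
vertices, which is the comap of `Γ_B` under the first projection). -/
theorem cayley_dihedral_lex_structure (n : ℕ) (hn : 3 ≤ n) (hodd : Odd n) :
    (cayleyGraph n (stdS n)).Connected ∧
    Nonempty (quotientGraph n ≃g SimpleGraph.cycleGraph n) ∧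
    Nonempty (cayleyGraph n (stdS n) ≃g
      (quotientGraph n).comap (Prod.fst : ZMod n × Fin 2 → ZMod n)) :=
  cayley_dihedral_lex_structure_general n hn
end

section
/- Let n ≥ 13 be odd with an integer r satisfying r^2 + r + 1 ≡ 0 (mod n), and let S_0 = {b, ab, a^{r+1}b} ⊆ D_{2n}. Then the automorphism σ_{r,1} of D_{2n} (a ↦ a^r, b ↦ ab) fixes S_0 setwise and has order 3; moreover Aut(D_{2n}, S_0) = ⟨σ_{r,1}⟩ ≅ Z_3. -/
/-!
An automorphism of `D_{2n}` is determined by the images of the two reflections `b` and `ab`, and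
it permutes the reflections affinely, `a^j b ↦ a^{α + γ j} b`. Writing `S₀ = {b, ab, a^{-u^2} b}`
(as `u + 1 = -u^2`), `σ = σ_{u,1}` cycles `b ↦ ab ↦ a^{-u^2} b ↦ b`, so it preserves `S₀`, has
order `3`, and `⟨σ⟩` is transitive on `S₀`. Hence `Aut(D_{2n}, S₀) ≤ ⟨σ⟩` once the stabiliser of
`b` in `Aut(D_{2n}, S₀)` is trivial. Such an automorphism either fixes `ab`, hence is the identity,
or swaps `ab` and `a^{-u^2} b`; the latter is the affine map `x ↦ -u^2 x` on exponents, which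
forces `u^4 = 1`, i.e. `u = 1`, i.e. `3 = 0` in `ZMod n`.
-/

open DihedralGroup

namespace DihedralGroup

variable {n : ℕ}

theorem r_eq_r_one_zpow (i : ZMod n) : (r i : DihedralGroup n) = r 1 ^ (i.cast : ℤ) := by
  rw [r_one_zpow, ZMod.intCast_zmod_cast]

theorem sr_neg_one_mul_sr_zero : (sr (-1) * sr 0 : DihedralGroup n) = r 1 := by
  rw [sr_mul_sr, zero_sub, neg_neg]

theorem sr_zero_mul_r (i : ZMod n) : (sr 0 * r i : DihedralGroup n) = sr i := by
  rw [sr_mul_r, zero_add]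

section Hom

variable {G F : Type*} [Group G] [FunLike F (DihedralGroup n) G]
  [MonoidHomClass F (DihedralGroup n) G]

theorem hom_ext_sr {f g : F} (h0 : f (sr 0) = g (sr 0)) (h1 : f (sr (-1)) = g (sr (-1))) :
    f = g := by
  have hr : ∀ i, f (r i) = g (r i) := fun i => by
    rw [r_eq_r_one_zpow, map_zpow, map_zpow, ← sr_neg_one_mul_sr_zero, map_mul, map_mul, h0, h1]
  refine DFunLike.ext f g fun x => ?_
  cases x with
  | r i => exact hr i
  | sr i => rw [← sr_zero_mul_r, map_mul, map_mul, h0, hr]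

end Hom

theorem map_sr_of_map_sr_zero_of_map_sr_neg_one {F : Type*}
    [FunLike F (DihedralGroup n) (DihedralGroup n)]
    [MonoidHomClass F (DihedralGroup n) (DihedralGroup n)] {f : F} {α β : ZMod n}
    (h0 : f (sr 0) = sr α) (h1 : f (sr (-1)) = sr β) (i : ZMod n) :
    f (sr i) = sr (α + (α - β) * i) := by
  rw [← sr_zero_mul_r, map_mul, r_eq_r_one_zpow, map_zpow, ← sr_neg_one_mul_sr_zero, map_mul, h0,
    h1, sr_mul_sr, r_zpow, sr_mul_r, ZMod.intCast_zmod_cast]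

variable {u : ZMod n}

def cubicSet (u : ZMod n) : Set (DihedralGroup n) := {sr 0, r 1 * sr 0, r (u + 1) * sr 0}

theorem cubicSet_eq (hu : u ^ 2 + u + 1 = 0) : cubicSet u = {sr 0, sr (-1), sr (u ^ 2)} := by
  rw [cubicSet, r_mul_sr, r_mul_sr, zero_sub, zero_sub, show -(u + 1) = u ^ 2 by
    linear_combination -hu]

section Cycle

variable {f : DihedralGroup n → DihedralGroup n}

theorem map_sr_of_cubic (hf : ∀ j, f (r j * sr 0) = r (u * j + 1) * sr 0) (i : ZMod n) :
    f (sr i) = sr (u * i - 1) := by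
  have h := hf (-i)
  rw [r_mul_sr, r_mul_sr, zero_sub, neg_neg] at h
  rw [h]
  congr 1
  ring

theorem map_sr_zero_of_cubic (hf : ∀ j, f (r j * sr 0) = r (u * j + 1) * sr 0) :
    f (sr 0) = sr (-1) := by
  rw [map_sr_of_cubic hf, mul_zero, zero_sub]

theorem map_sr_neg_one_of_cubic (hf : ∀ j, f (r j * sr 0) = r (u * j + 1) * sr 0)
    (hu : u ^ 2 + u + 1 = 0) : f (sr (-1)) = sr (u ^ 2) := by
  rw [map_sr_of_cubic hf]
  congr 1
  linear_combination -hu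

theorem map_sr_sq_of_cubic (hf : ∀ j, f (r j * sr 0) = r (u * j + 1) * sr 0)
    (hu : u ^ 2 + u + 1 = 0) : f (sr (u ^ 2)) = sr 0 := by
  rw [map_sr_of_cubic hf]
  congr 1
  linear_combination (u - 1) * hu

theorem image_cubicSet_of_cubic (hf : ∀ j, f (r j * sr 0) = r (u * j + 1) * sr 0)
    (hu : u ^ 2 + u + 1 = 0) : f '' cubicSet u = cubicSet u := by
  rw [cubicSet_eq hu, Set.image_insert_eq, Set.image_insert_eq, Set.image_singleton,
    map_sr_zero_of_cubic hf, map_sr_neg_one_of_cubic hf hu, map_sr_sq_of_cubic hf hu]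
  ext
  simp only [Set.mem_insert_iff, Set.mem_singleton_iff]
  tauto

end Cycle

section Aut

variable {φ : MulAut (DihedralGroup n)}

theorem orderOf_eq_three_of_cubic [Nontrivial (ZMod n)]
    (hφ : ∀ j, φ (r j * sr 0) = r (u * j + 1) * sr 0) (hu : u ^ 2 + u + 1 = 0) :
    orderOf φ = 3 := by
  have hcube : φ ^ 3 = 1 := hom_ext_sr (by
    rw [pow_three, MulAut.mul_apply, MulAut.mul_apply, map_sr_zero_of_cubic hφ,
      map_sr_neg_one_of_cubic hφ hu, map_sr_sq_of_cubic hφ hu, MulAut.one_apply]) (by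
    rw [pow_three, MulAut.mul_apply, MulAut.mul_apply, map_sr_neg_one_of_cubic hφ hu,
      map_sr_sq_of_cubic hφ hu, map_sr_zero_of_cubic hφ, MulAut.one_apply])
  refine orderOf_eq_prime hcube fun h => ?_
  have h0 := map_sr_zero_of_cubic hφ
  rw [h, MulAut.one_apply, sr.injEq, eq_comm, neg_eq_zero] at h0
  exact one_ne_zero h0

theorem eq_one_of_image_cubicSet (hu : u ^ 2 + u + 1 = 0) (h3 : (3 : ZMod n) ≠ 0)
    {χ : MulAut (DihedralGroup n)} (hχ : ⇑χ '' cubicSet u = cubicSet u)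
    (h0 : χ (sr 0) = sr 0) : χ = 1 := by
  have h1 : (1 : ZMod n) ≠ 0 := fun h => h3 (by linear_combination 3 * h)
  rw [cubicSet_eq hu] at hχ
  have hinj : ∀ {i j : ZMod n}, χ (sr i) = χ (sr j) → i = j := fun h => sr.inj (χ.injective h)
  rcases hχ.subset (Set.mem_image_of_mem χ (Set.mem_insert_of_mem _ (Set.mem_insert _ _))) with
    h | h | h
  · exact absurd (hinj (h.trans h0.symm)) (neg_ne_zero.mpr h1)
  · exact hom_ext_sr h0 h
  · have hsq := map_sr_of_map_sr_zero_of_map_sr_neg_one h0 h (u ^ 2)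
    rcases hχ.subset (Set.mem_image_of_mem χ
        (Set.mem_insert_of_mem _ (Set.mem_insert_of_mem _ rfl))) with h' | h' | h'
    · exact absurd (hinj (h'.trans h0.symm)) fun e =>
        h1 (by linear_combination (1 - u) * hu + u * e)
    · refine absurd (sr.inj (hsq.symm.trans h')) fun e => h3 ?_
      linear_combination (2 + u) * e + (u ^ 3 + u ^ 2 - 2 * u + 1) * hu
    · exact absurd (hinj (h'.trans h.symm)) fun e =>
        h1 (by linear_combination (1 + u) * e - u * hu)

open Pointwise in
theorem mem_zpowers_of_image_cubicSet (hφ : ∀ j, φ (r j * sr 0) = r (u * j + 1) * sr 0)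
    (hu : u ^ 2 + u + 1 = 0) (h3 : (3 : ZMod n) ≠ 0) {ψ : MulAut (DihedralGroup n)}
    (hψ : ⇑ψ '' cubicSet u = cubicSet u) : ψ ∈ Subgroup.zpowers φ := by
  let H := MulAction.stabilizer (MulAut (DihedralGroup n)) (cubicSet u)
  have hφH : φ ∈ H := image_cubicSet_of_cubic hφ hu
  obtain ⟨k, hk⟩ : ∃ k : ℕ, ψ (sr 0) = (φ ^ k) (sr 0) := by
    have h := hψ.subset (Set.mem_image_of_mem ψ (Set.mem_insert (sr 0) _))
    rw [cubicSet_eq hu] at h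
    rcases h with h | h | h
    · exact ⟨0, by rw [h, pow_zero, MulAut.one_apply]⟩
    · exact ⟨1, by rw [h, pow_one, map_sr_zero_of_cubic hφ]⟩
    · exact ⟨2, by rw [h, sq φ, MulAut.mul_apply, map_sr_zero_of_cubic hφ,
        map_sr_neg_one_of_cubic hφ hu]⟩
  have hχ : (φ ^ k)⁻¹ * ψ = 1 :=
    eq_one_of_image_cubicSet hu h3 (H.mul_mem (H.inv_mem (H.pow_mem hφH k)) hψ)
      (by rw [MulAut.mul_apply, hk, MulAut.inv_apply_self])
  rw [← inv_mul_eq_one.mp hχ]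
  exact Subgroup.pow_mem _ (Subgroup.mem_zpowers φ) k

end Aut

end DihedralGroup

theorem dihedral_cubic_aut_general (n : ℕ) (hn : 13 ≤ n)
    (u : ZMod n) (hu : u ^ 2 + u + 1 = 0)
    (S₀ : Set (DihedralGroup n))
    (hS₀ : S₀ = {DihedralGroup.sr 0, DihedralGroup.r 1 * DihedralGroup.sr 0,
      DihedralGroup.r (u + 1) * DihedralGroup.sr 0})
    (φ : MulAut (DihedralGroup n))
    (hφs : ∀ j : ZMod n, φ (DihedralGroup.r j * DihedralGroup.sr 0) =
      DihedralGroup.r (u * j + 1) * DihedralGroup.sr 0) :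
    ⇑φ '' S₀ = S₀ ∧ orderOf φ = 3 ∧
      ∀ ψ : MulAut (DihedralGroup n), ⇑ψ '' S₀ = S₀ → ψ ∈ Subgroup.zpowers φ := by
  have : Fact (1 < n) := ⟨by omega⟩
  have h3 : (3 : ZMod n) ≠ 0 := by
    rw [Ne, ← Nat.cast_ofNat, ZMod.natCast_eq_zero_iff]
    exact fun h => absurd (Nat.le_of_dvd three_pos h) (by omega)
  subst hS₀
  exact ⟨image_cubicSet_of_cubic hφs hu, orderOf_eq_three_of_cubic hφs hu,
    fun ψ hψ => mem_zpowers_of_image_cubicSet hφs hu h3 hψ⟩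

/-- Let `n ≥ 13` be odd with `r² + r + 1 ≡ 0 (mod n)`, and
`S₀ = {b, ab, a^{r+1}b} ⊆ D_{2n}`. Then the automorphism `σ_{r,1}` of `D_{2n}`
(`a ↦ aʳ`, `b ↦ ab`, i.e. `aⁱ ↦ a^{ri}`, `aʲb ↦ a^{rj+1}b`) fixes `S₀` setwise and
has order `3`, and `Aut(D_{2n}, S₀) = ⟨σ_{r,1}⟩ ≅ Z₃`. -/
theorem dihedral_cubic_aut (n : ℕ) (hn : 13 ≤ n) (hodd : Odd n)
    (u : ZMod n) (hu : u ^ 2 + u + 1 = 0)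
    (S₀ : Set (DihedralGroup n))
    (hS₀ : S₀ = {DihedralGroup.sr 0, DihedralGroup.r 1 * DihedralGroup.sr 0,
      DihedralGroup.r (u + 1) * DihedralGroup.sr 0})
    (φ : MulAut (DihedralGroup n))
    (hφr : ∀ i : ZMod n, φ (DihedralGroup.r i) = DihedralGroup.r (u * i))
    (hφs : ∀ j : ZMod n, φ (DihedralGroup.r j * DihedralGroup.sr 0) =
      DihedralGroup.r (u * j + 1) * DihedralGroup.sr 0) :
    ⇑φ '' S₀ = S₀ ∧ orderOf φ = 3 ∧
      ∀ ψ : MulAut (DihedralGroup n), ⇑ψ '' S₀ = S₀ → ψ ∈ Subgroup.zpowers φ :=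
  dihedral_cubic_aut_general n hn u hu S₀ hS₀ φ hφs
end

section
/- Let n = 7 and D_{14} = ⟨a, b | a^7 = b^2 = 1, bab = a^{-1}⟩, and S_0 = {b, ab, a^3 b}. Then no automorphism of D_{14} of order 2 fixes S_0 setwise, and consequently Aut(D_{14}, S_0) is the cyclic group of order 3 generated by σ_{2,1} : a ↦ a^2, b ↦ ab. -/
/-!
Every automorphism of `D_{2n}` (`n ≥ 3`) is affine: `r i ↦ r (k i)`, `sr i ↦ sr (s + k i)`, and it is
determined by `(k, s)`. It therefore fixes `S₀ = {sr 0, sr 6, sr 4}` iff `t ↦ s + k t` permutes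
`{0, 6, 4} ⊆ ZMod 7`, which happens only for `(k, s) = (1, 0), (2, 6), (4, 4)`, i.e. for `1, φ, φ²`.
As `φ³` has parameters `(8, 6 + 2·6 + 4·6) = (1, 0)`, the stabiliser is cyclic of order `3`, so it
contains no element of order `2`.
-/

namespace DihedralGroup

variable {n : ℕ}

/-- With `a = r 1` and `b = sr 0`, the paper's `σ_{k,s} : a ↦ aᵏ, b ↦ aˢ b` is
`IsAffineAut σ k (-s)`, since `r s * sr 0 = sr (-s)`. -/
def IsAffineAut (ψ : MulAut (DihedralGroup n)) (k s : ZMod n) : Prop :=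
  (∀ i, ψ (r i) = r (k * i)) ∧ ∀ i, ψ (sr i) = sr (s + k * i)

lemma isAffineAut_one : IsAffineAut (1 : MulAut (DihedralGroup n)) 1 0 :=
  ⟨fun i => by simp, fun i => by simp⟩

namespace IsAffineAut

variable {ψ χ : MulAut (DihedralGroup n)} {k s k' s' : ZMod n}

lemma mul (hψ : IsAffineAut ψ k s) (hχ : IsAffineAut χ k' s') :
    IsAffineAut (ψ * χ) (k * k') (s + k * s') := by
  refine ⟨fun i => ?_, fun i => ?_⟩
  · rw [MulAut.mul_apply, hχ.1, hψ.1, mul_assoc]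
  · rw [MulAut.mul_apply, hχ.2, hψ.2]; ring_nf

lemma ext (hψ : IsAffineAut ψ k s) (hχ : IsAffineAut χ k s) : ψ = χ := by
  ext (i | i)
  · rw [hψ.1, hχ.1]
  · rw [hψ.2, hχ.2]

lemma image_sr_eq_self_iff (hψ : IsAffineAut ψ k s) (A : Finset (ZMod n)) :
    ψ '' (sr '' A) = sr '' A ↔ A.image (fun t => s + k * t) = A := by
  rw [Set.image_image, funext hψ.2, ← Set.image_image sr, ← Finset.coe_image,
    (Set.image_injective.2 fun _ _ h => sr.inj h).eq_iff, Finset.coe_inj]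

end IsAffineAut

/-- `ψ (r 1)` is no reflection, as its square `ψ (r 2)` is not `1`; and `ψ (sr 0)` is no rotation,
as otherwise `ψ` would map every element to a rotation. -/
lemma exists_isAffineAut (hn : (2 : ZMod n) ≠ 0) (ψ : MulAut (DihedralGroup n)) :
    ∃ k s, IsAffineAut ψ k s := by
  obtain ⟨k, hk⟩ : ∃ k, ψ (r 1) = r k := by
    rcases h : ψ (r 1) with k | c
    · exact ⟨k, rfl⟩
    · have : ψ (r 2) = ψ 1 := by
        rw [← one_add_one_eq_two, ← r_mul_r, map_mul, h, sr_mul_sr, sub_self, r_zero, map_one]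
      exact absurd (r.inj (ψ.injective this)) hn
  have hr : ∀ i, ψ (r i) = r (k * i) := fun i => by
    rw [← ZMod.intCast_zmod_cast i, ← r_one_zpow, map_zpow, hk, r_zpow]
  obtain ⟨s, hs⟩ : ∃ s, ψ (sr 0) = sr s := by
    rcases h : ψ (sr 0) with c | s
    · obtain ⟨g, hg⟩ := ψ.surjective (sr 0)
      rcases g with i | i
      · rw [hr] at hg; cases hg
      · rw [← zero_add i, ← sr_mul_r, map_mul, h, hr, r_mul_r] at hg; cases hg
    · exact ⟨s, rfl⟩
  exact ⟨k, s, hr, fun i => by rw [← zero_add i, ← sr_mul_r, map_mul, hs, hr, sr_mul_r, zero_add]⟩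

end DihedralGroup

open DihedralGroup

lemma zmod7_affine_stabilizer_046 : ∀ k s : ZMod 7,
    ({0, 6, 4} : Finset (ZMod 7)).image (fun t => s + k * t) = {0, 6, 4} →
      (k = 1 ∧ s = 0) ∨ (k = 2 ∧ s = 6) ∨ (k = 4 ∧ s = 4) := by
  decide

lemma orderOf_eq_three_of_isAffineAut {φ : MulAut (DihedralGroup 7)} (hφ : IsAffineAut φ 2 6) :
    orderOf φ = 3 := by
  have : Fact (Nat.Prime 3) := ⟨Nat.prime_three⟩
  refine orderOf_eq_prime ((pow_three' φ).trans ((hφ.mul hφ).mul hφ |>.ext isAffineAut_one)) ?_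
  intro h
  have := hφ.1 1
  rw [h, MulAut.one_apply] at this
  exact absurd (r.inj this) (by decide)

lemma mem_zpowers_of_isAffineAut {φ ψ : MulAut (DihedralGroup 7)} {k s : ZMod 7}
    (hφ : IsAffineAut φ 2 6) (hψ : IsAffineAut ψ k s)
    (hA : ({0, 6, 4} : Finset (ZMod 7)).image (fun t => s + k * t) = {0, 6, 4}) :
    ψ ∈ Subgroup.zpowers φ := by
  rcases zmod7_affine_stabilizer_046 k s hA with ⟨rfl, rfl⟩ | ⟨rfl, rfl⟩ | ⟨rfl, rfl⟩
  · exact hψ.ext isAffineAut_one ▸ Subgroup.one_mem _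
  · exact hψ.ext hφ ▸ Subgroup.mem_zpowers φ
  · have hφ2 : IsAffineAut (φ ^ 2) 4 4 := sq φ ▸ hφ.mul hφ
    exact hψ.ext hφ2 ▸ Subgroup.pow_mem _ (Subgroup.mem_zpowers φ) 2

/-- Let `D₁₄ = ⟨a, b⟩` be the dihedral group of order 14 and
`S₀ = {b, ab, a³b}`. Then no automorphism of `D₁₄` of order `2` fixes `S₀`
setwise, and `Aut(D₁₄, S₀)` is the cyclic group of order `3` generated by
`σ_{2,1} : a ↦ a², b ↦ ab` (i.e. `aⁱ ↦ a^{2i}`, `aʲb ↦ a^{2j+1}b`). -/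
theorem dihedral14_aut_S0 (S₀ : Set (DihedralGroup 7))
    (hS₀ : S₀ = {DihedralGroup.sr 0, DihedralGroup.r 1 * DihedralGroup.sr 0,
      DihedralGroup.r 3 * DihedralGroup.sr 0})
    (φ : MulAut (DihedralGroup 7))
    (hφr : ∀ i : ZMod 7, φ (DihedralGroup.r i) = DihedralGroup.r (2 * i))
    (hφs : ∀ j : ZMod 7, φ (DihedralGroup.r j * DihedralGroup.sr 0) =
      DihedralGroup.r (2 * j + 1) * DihedralGroup.sr 0) :
    (∀ ψ : MulAut (DihedralGroup 7), orderOf ψ = 2 → ⇑ψ '' S₀ ≠ S₀) ∧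
    ⇑φ '' S₀ = S₀ ∧ orderOf φ = 3 ∧
    (∀ ψ : MulAut (DihedralGroup 7), ⇑ψ '' S₀ = S₀ → ψ ∈ Subgroup.zpowers φ) := by
  set A : Finset (ZMod 7) := {0, 6, 4}
  have hS : S₀ = sr '' A := by
    simp only [hS₀, r_mul_sr, A, Finset.coe_insert, Finset.coe_singleton, Set.image_insert_eq,
      Set.image_singleton]
    rfl
  have hφ : IsAffineAut φ 2 6 := ⟨hφr, fun i => by
    rw [← neg_neg i, ← zero_sub, ← r_mul_sr, hφs, r_mul_sr]; congr 1
    rw [show (6 : ZMod 7) = -1 from rfl]; ring⟩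
  have stab : ∀ ψ : MulAut (DihedralGroup 7), ψ '' S₀ = S₀ → ψ ∈ Subgroup.zpowers φ := by
    intro ψ hψS
    obtain ⟨k, s, hψ⟩ := exists_isAffineAut (by decide) ψ
    exact mem_zpowers_of_isAffineAut hφ hψ ((hS ▸ hψ.image_sr_eq_self_iff A).1 hψS)
  have hφ3 := orderOf_eq_three_of_isAffineAut hφ
  refine ⟨fun ψ hψ2 hψS => ?_, hS ▸ (hφ.image_sr_eq_self_iff A).2 (by decide), hφ3, stab⟩
  have := orderOf_dvd_of_mem_zpowers (stab ψ hψS)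
  rw [hψ2, hφ3] at this
  exact absurd this (by decide)
end

section
/- Let n ≥ 4 be even, β the automorphism of D_{2n} with a ↦ a^{-1}, b ↦ a^2 b, and consider the permutation group generated by the right translation R(a^2 b) composed with β, together with R(ab), acting on D_{2n}. Then R(a^2 b)β has order n, R(ab)·(R(a^2 b)β)·R(ab) = (R(a^2 b)β)^{-1}, and L := ⟨R(a^2 b)β, R(ab)⟩ is a dihedral group of order 2n acting regularly on D_{2n}, with L ≠ R(D_{2n}). -/
/-!
The group `L` is the conjugate of the left regular representation `λ(D_{2n})` by an explicit
permutation `twist` of `D_{2n}` (the orbit map of `1` under `L`; it is defined by the parity of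
the exponent, hence needs `n` even), which intertwines `λ(a)` with `R(a²b)β` and `λ(b)` with
`R(ab)`. Conjugates of the left regular representation are regular and
isomorphic to `D_{2n}`, so the order of `R(a²b)β` is that of `a`, and the relation is the image of
`bab = a⁻¹`. Finally `R(a²b)β` is not a right translation: it sends `1` to `b` but `b` to `a² ≠ b²`.
-/

open DihedralGroup

section Regular

variable {G : Type*} [Group G]

theorem mem_rightRegRep_iff {f : Equiv.Perm G} : f ∈ rightRegRep G ↔ ∀ x, f x = x * f 1 := by
  refine ⟨?_, fun h => ⟨(f 1)⁻¹, Equiv.ext fun x => by simp [rightRegHom, h x]⟩⟩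
  rintro ⟨g, rfl⟩ x
  simp [rightRegHom]

def conjLeftRegular (π : Equiv.Perm G) : G →* Equiv.Perm G :=
  (MulAut.conj π).toMonoidHom.comp (MulAction.toPermHom G G)

theorem conjLeftRegular_apply (π : Equiv.Perm G) (g x : G) :
    conjLeftRegular π g x = π (g * π⁻¹ x) := rfl

theorem conjLeftRegular_injective (π : Equiv.Perm G) : Function.Injective (conjLeftRegular π) :=
  fun g h hgh => by
    simpa [conjLeftRegular_apply] using congrArg (fun f => π⁻¹ (f (π 1))) hgh

theorem conjLeftRegular_eq_of_apply_mul {π f : Equiv.Perm G} {g : G}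
    (h : ∀ x, π (g * x) = f (π x)) : conjLeftRegular π g = f :=
  Equiv.ext fun x => by simp [conjLeftRegular_apply, h]

theorem existsUnique_range_conjLeftRegular_apply_eq (π : Equiv.Perm G) (x y : G) :
    ∃! f : (conjLeftRegular π).range, (f : Equiv.Perm G) x = y := by
  refine ⟨⟨_, π⁻¹ y * (π⁻¹ x)⁻¹, rfl⟩, ?_, ?_⟩
  · show π (π⁻¹ y * (π⁻¹ x)⁻¹ * π⁻¹ x) = y
    simp
  rintro ⟨_, g, rfl⟩ hg
  have hg' : g * π⁻¹ x = π⁻¹ y := by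
    rw [← hg]
    exact (π.symm_apply_apply _).symm
  exact Subtype.ext (congrArg (conjLeftRegular π) (eq_mul_inv_of_mul_eq hg'))

end Regular

theorem ZMod.eq_zero_or_eq_one (a : ZMod 2) : a = 0 ∨ a = 1 := by
  revert a; decide

namespace DihedralGroup

variable {n : ℕ}

theorem closure_r_one_sr_zero : Subgroup.closure {(r 1 : DihedralGroup n), sr 0} = ⊤ := by
  have hr : ∀ i : ZMod n, r i ∈ Subgroup.closure {(r 1 : DihedralGroup n), sr 0} := fun i => by
    rw [← ZMod.intCast_zmod_cast i, ← r_one_zpow]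
    exact zpow_mem (Subgroup.subset_closure (by simp)) _
  refine eq_top_iff.mpr fun x _ => ?_
  rcases x with i | i
  · exact hr i
  · rw [← zero_add i, ← sr_mul_r]
    exact mul_mem (Subgroup.subset_closure (by simp)) (hr i)

/-- `R(a²b)β` written out, with `a = r 1` and `b = sr 0`. -/
def twistedRotation (n : ℕ) : Equiv.Perm (DihedralGroup n) where
  toFun
    | r i => sr i
    | sr i => r (i + 2)
  invFun
    | r i => sr (i - 2)
    | sr i => r i
  left_inv := by rintro (i | i) <;> simp
  right_inv := by rintro (i | i) <;> simp

theorem perm_mul_mulRight_eq_twistedRotation {β : Equiv.Perm (DihedralGroup n)}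
    (hβr : ∀ i : ZMod n, β (r i) = r (-i))
    (hβs : ∀ j : ZMod n, β (r j * sr 0) = r (-j + 2) * sr 0) :
    β * Equiv.mulRight (r 1 ^ 2 * sr 0) = twistedRotation n := by
  have hβs' : ∀ i : ZMod n, β (sr i) = sr (-i - 2) := fun i => by
    simpa [r_mul_sr, sub_eq_add_neg, add_comm] using hβs (-i)
  ext (i | i) <;>
    simp [twistedRotation, pow_two, r_mul_r, r_mul_sr, sr_mul_sr, hβr, hβs'] <;> ring

theorem twistedRotation_notMem_rightRegRep (hn : 2 < n) :
    twistedRotation n ∉ rightRegRep (DihedralGroup n) := fun h => by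
  have h2 := mem_rightRegRep_iff.mp h (sr 0)
  simp only [twistedRotation, Equiv.coe_fn_mk, one_def, sr_mul_sr, sub_self, zero_add,
    r.injEq] at h2
  have : n ∣ 2 := (ZMod.natCast_eq_zero_iff 2 n).mp (by exact_mod_cast h2)
  exact absurd (Nat.le_of_dvd two_pos this) (by omega)

def parity (h2 : 2 ∣ n) : ZMod n →+* ZMod 2 := ZMod.castHom h2 _

def twist (h2 : 2 ∣ n) : Equiv.Perm (DihedralGroup n) where
  toFun
    | r k => if parity h2 k = 0 then r k else sr (k - 1)
    | sr k => if parity h2 k = 0 then sr (-1 - k) else r (-k)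
  invFun
    | r k => if parity h2 k = 0 then r k else sr (-k)
    | sr k => if parity h2 k = 0 then r (k + 1) else sr (-1 - k)
  left_inv := by
    rintro (k | k) <;> rcases ZMod.eq_zero_or_eq_one (parity h2 k) with h | h <;> simp [h]
  right_inv := by
    rintro (k | k) <;> rcases ZMod.eq_zero_or_eq_one (parity h2 k) with h | h <;> simp [h]

theorem twist_r_one_mul (h2 : 2 ∣ n) (x : DihedralGroup n) :
    twist h2 (r 1 * x) = twistedRotation n (twist h2 x) := by
  rcases x with k | k <;> rcases ZMod.eq_zero_or_eq_one (parity h2 k) with h | h <;>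
    simp +decide [twist, twistedRotation, h, r_mul_r, r_mul_sr] <;> grind

theorem twist_sr_zero_mul (h2 : 2 ∣ n) (x : DihedralGroup n) :
    twist h2 (sr 0 * x) = twist h2 x * (r 1 * sr 0) := by
  rcases x with k | k <;> rcases ZMod.eq_zero_or_eq_one (parity h2 k) with h | h <;>
    simp [twist, h, sr_mul_r, sr_mul_sr, r_mul_sr] <;> grind

end DihedralGroup

/-- Let `n ≥ 4` be even and `β` the automorphism of `D_{2n}` with `a ↦ a⁻¹`,
`b ↦ a²b` (i.e. `aⁱ ↦ a⁻ⁱ`, `aʲb ↦ a^{-j+2}b`), viewed as a permutation of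
`D_{2n}`. Let `c = R(a²b)β` (apply the right translation `R(a²b)` first, then `β`)
and `R(ab)` the right translation by `ab`. Then `c` has order `n`,
`R(ab)·c·R(ab) = c⁻¹`, and `L = ⟨c, R(ab)⟩` is a dihedral group of order `2n`
acting regularly on `D_{2n}`, with `L ≠ R(D_{2n})`. -/
theorem dihedral_second_regular_subgroup (n : ℕ) (hn : 4 ≤ n) (heven : Even n)
    (β : Equiv.Perm (DihedralGroup n))
    (hβr : ∀ i : ZMod n, β (DihedralGroup.r i) = DihedralGroup.r (-i))
    (hβs : ∀ j : ZMod n, β (DihedralGroup.r j * DihedralGroup.sr 0) =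
      DihedralGroup.r (-j + 2) * DihedralGroup.sr 0) :
    orderOf (β * Equiv.mulRight (DihedralGroup.r 1 ^ 2 * DihedralGroup.sr 0)) = n ∧
    Equiv.mulRight (DihedralGroup.r 1 * DihedralGroup.sr 0) *
        (β * Equiv.mulRight (DihedralGroup.r 1 ^ 2 * DihedralGroup.sr 0)) *
        Equiv.mulRight (DihedralGroup.r 1 * DihedralGroup.sr 0) =
      (β * Equiv.mulRight (DihedralGroup.r 1 ^ 2 * DihedralGroup.sr 0))⁻¹ ∧
    (Nonempty ((Subgroup.closure
        {β * Equiv.mulRight (DihedralGroup.r 1 ^ 2 * DihedralGroup.sr 0),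
         Equiv.mulRight (DihedralGroup.r 1 * DihedralGroup.sr 0)} :
        Subgroup (Equiv.Perm (DihedralGroup n))) ≃* DihedralGroup n)) ∧
    (∀ x y : DihedralGroup n, ∃! f : (Subgroup.closure
        {β * Equiv.mulRight (DihedralGroup.r 1 ^ 2 * DihedralGroup.sr 0),
         Equiv.mulRight (DihedralGroup.r 1 * DihedralGroup.sr 0)} :
        Subgroup (Equiv.Perm (DihedralGroup n))), (f : Equiv.Perm (DihedralGroup n)) x = y) ∧
    Subgroup.closure
        {β * Equiv.mulRight (DihedralGroup.r 1 ^ 2 * DihedralGroup.sr 0),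
         Equiv.mulRight (DihedralGroup.r 1 * DihedralGroup.sr 0)} ≠
      rightRegRep (DihedralGroup n) := by
  set φ := conjLeftRegular (twist heven.two_dvd)
  have hφr : φ (r 1) = twistedRotation n :=
    conjLeftRegular_eq_of_apply_mul (twist_r_one_mul _)
  have hφs : φ (sr 0) = Equiv.mulRight (r 1 * sr 0) :=
    conjLeftRegular_eq_of_apply_mul (twist_sr_zero_mul _)
  have hL : Subgroup.closure {twistedRotation n, Equiv.mulRight (r 1 * sr 0)} = φ.range := by
    rw [MonoidHom.range_eq_map, ← closure_r_one_sr_zero, MonoidHom.map_closure,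
      Set.image_pair, hφr, hφs]
  have hφ := conjLeftRegular_injective (twist heven.two_dvd)
  rw [perm_mul_mulRight_eq_twistedRotation hβr hβs, hL, ← hφr, ← hφs]
  refine ⟨by rw [orderOf_injective φ hφ, orderOf_r_one], ?_, ⟨(MonoidHom.ofInjective hφ).symm⟩,
    existsUnique_range_conjLeftRegular_apply_eq _, fun h => ?_⟩
  · rw [← map_mul, ← map_mul, ← map_inv]
    simp [sr_mul_r, sr_mul_sr, inv_r]
  · refine twistedRotation_notMem_rightRegRep (n := n) (by omega) ?_
    rw [← h, ← hφr]
    exact ⟨r 1, rfl⟩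
end

section
/- Let n ≥ 4 be even and S = {a, a^{-1}, ab, a^{n/2+1} b} ⊆ D_{2n}. Then S = S^{-1}, ⟨S⟩ = D_{2n}, and the automorphisms σ_{1,n/2} (a ↦ a, b ↦ a^{n/2} b) and σ_{-1,2} (a ↦ a^{-1}, b ↦ a^2 b) both fix S setwise and generate a subgroup of Aut(D_{2n}, S) isomorphic to Z_2 × Z_2. -/
open DihedralGroup

private def homOfSq {M : Type*} [Monoid M] (g : M) (hg : g * g = 1) :
    Multiplicative (ZMod 2) →* M where
  toFun x := g ^ (Multiplicative.toAdd x).val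
  map_one' := by
    show g ^ (0 : ZMod 2).val = 1
    simp
  map_mul' x y := by
    have hg2 : g ^ 2 = 1 := by rw [pow_two, hg]
    have key : ∀ k : ℕ, g ^ k = g ^ (k % 2) := by
      intro k
      conv_lhs => rw [← Nat.div_add_mod k 2]
      rw [pow_add, pow_mul, hg2, one_pow, one_mul]
    show g ^ (Multiplicative.toAdd x + Multiplicative.toAdd y).val
        = g ^ (Multiplicative.toAdd x).val * g ^ (Multiplicative.toAdd y).val
    rw [ZMod.val_add, ← key, pow_add]

private theorem homOfSq_one {M : Type*} [Monoid M] (g : M) (hg : g * g = 1) :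
    homOfSq g hg (Multiplicative.ofAdd 1) = g := by
  show g ^ (1 : ZMod 2).val = g
  rw [show (1 : ZMod 2).val = 1 from rfl, pow_one]

/-- Let `n ≥ 4` be even and `S = {a, a⁻¹, ab, a^{n/2+1}b} ⊆ D_{2n}`. Then
`S = S⁻¹`, `⟨S⟩ = D_{2n}`, and the automorphisms `σ_{1,n/2}` (`a ↦ a`,
`b ↦ a^{n/2}b`) and `σ_{-1,2}` (`a ↦ a⁻¹`, `b ↦ a²b`) both fix `S` setwise and
generate a subgroup of `Aut(D_{2n}, S)` isomorphic to `Z₂ × Z₂`. -/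
theorem dihedral_even_S_aut (n : ℕ) (hn : 4 ≤ n) (heven : Even n)
    (S : Set (DihedralGroup n))
    (hS : S = {DihedralGroup.r 1, (DihedralGroup.r 1)⁻¹,
      DihedralGroup.r 1 * DihedralGroup.sr 0,
      DihedralGroup.r (((n / 2 : ℕ) : ZMod n) + 1) * DihedralGroup.sr 0})
    (φ ψ : MulAut (DihedralGroup n))
    (hφr : ∀ i : ZMod n, φ (DihedralGroup.r i) = DihedralGroup.r i)
    (hφs : ∀ j : ZMod n, φ (DihedralGroup.r j * DihedralGroup.sr 0) =
      DihedralGroup.r (j + ((n / 2 : ℕ) : ZMod n)) * DihedralGroup.sr 0)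
    (hψr : ∀ i : ZMod n, ψ (DihedralGroup.r i) = DihedralGroup.r (-i))
    (hψs : ∀ j : ZMod n, ψ (DihedralGroup.r j * DihedralGroup.sr 0) =
      DihedralGroup.r (-j + 2) * DihedralGroup.sr 0) :
    S⁻¹ = S ∧ Subgroup.closure S = ⊤ ∧ ⇑φ '' S = S ∧ ⇑ψ '' S = S ∧
    Nonempty ((Subgroup.closure {φ, ψ} : Subgroup (MulAut (DihedralGroup n))) ≃*
      (Multiplicative (ZMod 2) × Multiplicative (ZMod 2))) := by
  haveI : NeZero n := ⟨by omega⟩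
  set m : ZMod n := ((n / 2 : ℕ) : ZMod n) with hmdef
  -- basic ZMod facts
  have hm0 : m ≠ 0 := by
    rw [hmdef, Ne, ZMod.natCast_eq_zero_iff]
    intro h
    have := Nat.le_of_dvd (by omega) h
    omega
  have hmm : m + m = 0 := by
    rw [hmdef, ← Nat.cast_add]
    obtain ⟨k, hk⟩ := heven
    have : n / 2 + n / 2 = n := by omega
    rw [this, ZMod.natCast_self]
  have h2 : (2 : ZMod n) ≠ 0 := by
    have : ((2 : ℕ) : ZMod n) ≠ 0 := by
      rw [Ne, ZMod.natCast_eq_zero_iff]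
      intro h
      have := Nat.le_of_dvd (by omega) h
      omega
    simpa using this
  -- basic dihedral facts
  have hinvr : ∀ i : ZMod n, (r i : DihedralGroup n)⁻¹ = r (-i) := fun i =>
    inv_eq_of_mul_eq_one_right (by rw [r_mul_r, add_neg_cancel, one_def])
  have hinvsr : ∀ i : ZMod n, (sr i : DihedralGroup n)⁻¹ = sr i := fun i =>
    inv_eq_of_mul_eq_one_right (sr_mul_self i)
  have hsr' : ∀ j : ZMod n, (sr j : DihedralGroup n) = r (-j) * sr 0 := fun j => by
    rw [r_mul_sr, zero_sub, neg_neg]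
  have hφsr : ∀ j : ZMod n, φ (sr j) = sr (j - m) := by
    intro j
    rw [hsr' j, hφs, r_mul_sr, zero_sub, neg_add]
    ring_nf
  have hψsr : ∀ j : ZMod n, ψ (sr j) = sr (-j - 2) := by
    intro j
    rw [hsr' j, hψs, r_mul_sr, neg_neg, zero_sub, neg_add]
    ring_nf
  -- the two automorphisms are involutions and commute
  have hφ2 : φ * φ = 1 := by
    ext x
    rcases x with i | j
    · simp [MulAut.mul_apply, hφr]
    · simp only [MulAut.mul_apply, hφsr, MulAut.one_apply, sr.injEq]
      linear_combination -hmm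
  have hψ2 : ψ * ψ = 1 := by
    ext x
    rcases x with i | j
    · simp [MulAut.mul_apply, hψr]
    · simp only [MulAut.mul_apply, hψsr, MulAut.one_apply, sr.injEq]
      ring
  have hcomm : φ * ψ = ψ * φ := by
    ext x
    rcases x with i | j
    · simp [MulAut.mul_apply, hφr, hψr]
    · simp only [MulAut.mul_apply, hφsr, hψsr, sr.injEq]
      first | linear_combination hmm | linear_combination -hmm
  -- distinctness
  have hφne : φ ≠ 1 := by
    intro h
    have := hφsr 0
    rw [h] at this
    simp only [MulAut.one_apply, sr.injEq, zero_sub] at this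
    exact hm0 (by linear_combination this)
  have hψne : ψ ≠ 1 := by
    intro h
    have := hψr 1
    rw [h] at this
    simp only [MulAut.one_apply, r.injEq] at this
    exact h2 (by linear_combination this)
  have hφψne : φ * ψ ≠ 1 := by
    intro h
    have := congrArg (fun e : MulAut (DihedralGroup n) => e (r 1)) h
    simp only [MulAut.mul_apply, MulAut.one_apply, hψr, hφr, r.injEq] at this
    exact h2 (by linear_combination -this)
  refine ⟨?_, ?_, ?_, ?_, ?_⟩
  · -- S⁻¹ = S
    rw [hS]
    simp only [Set.inv_insert, Set.inv_singleton, inv_inv]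
    rw [r_mul_sr, r_mul_sr, zero_sub, zero_sub, hinvr, hinvsr, hinvsr]
    ext x
    simp only [Set.mem_insert_iff, Set.mem_singleton_iff]
    tauto
  · -- closure S = ⊤
    rw [eq_top_iff]
    rintro x -
    have hr1 : (r 1 : DihedralGroup n) ∈ Subgroup.closure S :=
      Subgroup.subset_closure (by rw [hS]; left; rfl)
    have hs1 : (r 1 * sr 0 : DihedralGroup n) ∈ Subgroup.closure S :=
      Subgroup.subset_closure (by rw [hS]; right; right; left; rfl)
    have hrall : ∀ i : ZMod n, (r i : DihedralGroup n) ∈ Subgroup.closure S := by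
      intro i
      have : (r 1 : DihedralGroup n) ^ i.val = r i := by
        rw [r_one_pow, ZMod.natCast_rightInverse i]
      exact this ▸ pow_mem hr1 i.val
    rcases x with i | j
    · exact hrall i
    · have : (r 1 * sr 0 : DihedralGroup n) * r (j + 1) = sr j := by
        rw [r_mul_sr, zero_sub, sr_mul_r]
        ring_nf
      exact this ▸ mul_mem hs1 (hrall (j + 1))
  · -- φ '' S = S
    rw [hS]
    simp only [Set.image_insert_eq, Set.image_singleton, hφr, hφs, map_inv]
    have e1 : (1 : ZMod n) + m = m + 1 := by ring
    have e2 : m + 1 + m = 1 := by linear_combination hmm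
    rw [e1, e2]
    ext x
    simp only [Set.mem_insert_iff, Set.mem_singleton_iff]
    tauto
  · -- ψ '' S = S
    rw [hS]
    simp only [Set.image_insert_eq, Set.image_singleton, hψr, hψs, map_inv]
    have e1 : (-1 : ZMod n) + 2 = 1 := by ring
    have e2 : -(m + 1) + 2 = m + 1 := by linear_combination -hmm
    have e3 : (r (1 : ZMod n))⁻¹ = r (-1) := hinvr 1
    have e4 : (r (-1 : ZMod n))⁻¹ = r 1 := by rw [hinvr, neg_neg]
    rw [e1, e2, e3, e4]
    ext x
    simp only [Set.mem_insert_iff, Set.mem_singleton_iff]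
    tauto
  · -- the subgroup generated by φ and ψ is Z₂ × Z₂
    have hcomm' : ∀ (x y : Multiplicative (ZMod 2)),
        Commute (homOfSq φ hφ2 x) (homOfSq ψ hψ2 y) := by
      intro x y
      exact (Commute.pow_pow hcomm _ _ : _)
    set F : Multiplicative (ZMod 2) × Multiplicative (ZMod 2) →* MulAut (DihedralGroup n) :=
      (homOfSq φ hφ2).noncommCoprod (homOfSq ψ hψ2) hcomm' with hF
    have hFapp : ∀ x y, F (x, y) = φ ^ (Multiplicative.toAdd x).val *
        ψ ^ (Multiplicative.toAdd y).val := fun x y => rfl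
    have hFφ : F (Multiplicative.ofAdd 1, 1) = φ := by
      rw [hFapp]
      show φ ^ (1 : ZMod 2).val * ψ ^ (0 : ZMod 2).val = φ
      rw [show (1 : ZMod 2).val = 1 from rfl, show (0 : ZMod 2).val = 0 from rfl, pow_one,
        pow_zero, mul_one]
    have hFψ : F (1, Multiplicative.ofAdd 1) = ψ := by
      rw [hFapp]
      show φ ^ (0 : ZMod 2).val * ψ ^ (1 : ZMod 2).val = ψ
      rw [show (1 : ZMod 2).val = 1 from rfl, show (0 : ZMod 2).val = 0 from rfl, pow_one,
        pow_zero, one_mul]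
    have hrange : F.range = Subgroup.closure {φ, ψ} := by
      apply le_antisymm
      · rintro - ⟨⟨x, y⟩, rfl⟩
        rw [hFapp]
        exact mul_mem
          (pow_mem (Subgroup.subset_closure (by left; rfl)) _)
          (pow_mem (Subgroup.subset_closure (by right; rfl)) _)
      · rw [Subgroup.closure_le]
        rintro z (rfl | rfl)
        · exact ⟨(Multiplicative.ofAdd 1, 1), hFφ⟩
        · exact ⟨(1, Multiplicative.ofAdd 1), hFψ⟩
    have hinj : Function.Injective F := by
      rw [← MonoidHom.ker_eq_bot_iff, Subgroup.eq_bot_iff_forall]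
      rintro ⟨x, y⟩ hxy
      rw [MonoidHom.mem_ker, hFapp] at hxy
      have hx2 : ∀ z : ZMod 2, z = 0 ∨ z = 1 := by decide
      rcases hx2 (Multiplicative.toAdd x) with hx | hx <;>
        rcases hx2 (Multiplicative.toAdd y) with hy | hy <;>
        rw [hx, hy] at hxy
      · have : x = 1 ∧ y = 1 := ⟨hx, hy⟩
        simp [Prod.ext_iff, this.1, this.2]
      · exfalso
        apply hψne
        simpa [ZMod.val_zero, ZMod.val_one] using hxy
      · exfalso
        apply hφne
        simpa [ZMod.val_zero, ZMod.val_one] using hxy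
      · exfalso
        apply hφψne
        simpa [ZMod.val_one] using hxy
    exact ⟨(MulEquiv.subgroupCongr hrange.symm).trans (MonoidHom.ofInjective hinj).symm⟩
end

section
/- Let n ≥ 6 be even, S = {a, a^{-1}, ab, a^{n/2+1} b} ⊆ D_{2n}, and Γ = Cay(D_{2n}, S). Then the set Γ_2(1) of vertices at distance 2 from the identity in Γ is exactly {a^2, b, a^{n/2}b, a^{n/2}, a^2 b, a^{n/2+2}b, a^{-2}}, which has size 7. -/
/-!
Since `S` is closed under inverses and avoids `1`, the vertices at distance two from `1` are the
elements of `S * S` outside `{1} ∪ S`. As `n / 2 ≡ -(n / 2) (mod n)`, the sixteen products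
collapse to `1` and seven further elements. Every residue that has to be told apart from another
one is represented by an integer in `[-2, n / 2]`, an interval shorter than `n` once `n ≥ 6`; so
these residues are distinct, which separates the seven elements from `{1} ∪ S` and from each
other.
-/

open DihedralGroup

/-- `S = {a, a⁻¹, ab, a^{n/2+1}b}`. -/
def evenS (n : ℕ) : Set (DihedralGroup n) :=
  {DihedralGroup.r 1, (DihedralGroup.r 1)⁻¹,
    DihedralGroup.r 1 * DihedralGroup.sr 0,
    DihedralGroup.r (((n / 2 : ℕ) : ZMod n) + 1) * DihedralGroup.sr 0}

open Pointwise

namespace SimpleGraph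

variable {V : Type*} {G : SimpleGraph V} {u v : V}

theorem dist_eq_two_iff :
    G.dist u v = 2 ↔ u ≠ v ∧ ¬G.Adj u v ∧ ∃ w, G.Adj u w ∧ G.Adj w v := by
  constructor
  · intro h
    refine ⟨fun huv => by simp [huv] at h,
      fun hadj => by simp [dist_eq_one_iff_adj.2 hadj] at h, ?_⟩
    obtain ⟨p, hp⟩ := exists_walk_of_dist_ne_zero (G := G) (by omega : G.dist u v ≠ 0)
    rw [h] at hp
    match p, hp with
    | .cons h₁ (.cons h₂ .nil), _ => exact ⟨_, h₁, h₂⟩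
  · rintro ⟨huv, hadj, w, huw, hwv⟩
    have hle : G.dist u v ≤ 2 := dist_le (.cons huw (.cons hwv .nil))
    have hne0 : G.dist u v ≠ 0 :=
      dist_ne_zero_iff_ne_and_reachable.2 ⟨huv, ⟨.cons huw (.cons hwv .nil)⟩⟩
    have hne1 : G.dist u v ≠ 1 := mt dist_eq_one_iff_adj.1 hadj
    omega

end SimpleGraph

theorem ZMod.intCast_injOn_Ico (n : ℕ) (a : ℤ) :
    Set.InjOn ((↑) : ℤ → ZMod n) (Set.Ico a (a + n)) := by
  intro x hx y hy hxy
  rw [Set.mem_Ico] at hx hy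
  have := Int.eq_zero_of_abs_lt_dvd ((ZMod.intCast_eq_intCast_iff_dvd_sub x y n).1 hxy)
    (by rw [abs_lt]; omega)
  omega

theorem ZMod.natCast_half_add_self {n : ℕ} (h : Even n) :
    ((n / 2 : ℕ) : ZMod n) + ((n / 2 : ℕ) : ZMod n) = 0 := by
  rw [← Nat.cast_add, ← two_mul, Nat.mul_div_cancel' h.two_dvd, ZMod.natCast_self]

theorem ZMod.neg_natCast_half {n : ℕ} (h : Even n) :
    -((n / 2 : ℕ) : ZMod n) = ((n / 2 : ℕ) : ZMod n) :=
  neg_eq_of_add_eq_zero_left (natCast_half_add_self h)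

theorem List.Nodup.map_intCast_zmod {n : ℕ} {l : List ℤ} (hl : l.Nodup) (a : ℤ)
    (h : ∀ x ∈ l, a ≤ x ∧ x < a + n) : (l.map ((↑) : ℤ → ZMod n)).Nodup :=
  hl.map_on fun x hx y hy => ZMod.intCast_injOn_Ico n a (h x hx) (h y hy)

namespace DihedralGroup

variable {n : ℕ}

@[simp]
theorem r_eq_one_iff {i : ZMod n} : r i = 1 ↔ i = 0 := by
  rw [← r_zero, r.injEq]

@[simp]
theorem sr_ne_one (i : ZMod n) : sr i ≠ 1 := by
  rw [one_def]
  nofun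

end DihedralGroup

section CayleyGraph

variable {n : ℕ} {S : Set (DihedralGroup n)}

theorem cayleyGraph_adj_iff (hS : ∀ s ∈ S, s⁻¹ ∈ S) (h1 : 1 ∉ S)
    {x y : DihedralGroup n} :
    (cayleyGraph n S).Adj x y ↔ y * x⁻¹ ∈ S := by
  refine ⟨fun ⟨_, h⟩ => h.elim id fun h => by simpa using hS _ h, fun h => ⟨?_, .inl h⟩⟩
  rintro rfl
  exact h1 (by simpa using h)

theorem setOf_cayleyGraph_dist_one_eq_two (hS : ∀ s ∈ S, s⁻¹ ∈ S) (h1 : 1 ∉ S) :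
    {v | (cayleyGraph n S).dist 1 v = 2} = (S * S) \ insert 1 S := by
  ext v
  simp only [Set.mem_ofPred_eq, SimpleGraph.dist_eq_two_iff, cayleyGraph_adj_iff hS h1, inv_one,
    mul_one, Set.mem_sdiff, Set.mem_insert_iff, Set.mem_mul, not_or]
  constructor
  · rintro ⟨hv1, hvS, w, hw, hvw⟩
    exact ⟨⟨v * w⁻¹, hvw, w, hw, inv_mul_cancel_right v w⟩, Ne.symm hv1, hvS⟩
  · rintro ⟨⟨t, ht, s, hs, rfl⟩, hv1, hvS⟩
    exact ⟨Ne.symm hv1, hvS, s, hs, by simpa using ht⟩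

end CayleyGraph

section EvenS

variable {n : ℕ}

local notation "m" => ((n / 2 : ℕ) : ZMod n)

theorem inv_mem_evenS {s : DihedralGroup n} (hs : s ∈ evenS n) : s⁻¹ ∈ evenS n := by
  rcases hs with rfl | rfl | rfl | rfl <;> simp [evenS, r_mul_sr]

theorem one_notMem_evenS (hn : n ≠ 1) : 1 ∉ evenS n := by
  have := ZMod.nontrivial_iff.2 hn
  simp [evenS, r_mul_sr, eq_comm (a := (1 : DihedralGroup n))]

theorem evenS_eq (h : Even n) : evenS n = {r 1, r (-1), sr (-1), sr (m - 1)} := by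
  simp only [evenS, inv_r, r_mul_sr, zero_sub, neg_add, ZMod.neg_natCast_half h,
    ← sub_eq_add_neg]

-- `a^i b` is `r i * sr 0 = sr (-i)`, and `-(n / 2) = n / 2`.
def evenSphereTwo (n : ℕ) : Set (DihedralGroup n) :=
  {r 2, sr 0, sr ((n / 2 : ℕ) : ZMod n), r ((n / 2 : ℕ) : ZMod n), sr (-2),
    sr (((n / 2 : ℕ) : ZMod n) - 2), r (-2)}

theorem evenS_mul_evenS (h : Even n) : evenS n * evenS n = insert 1 (evenSphereTwo n) := by
  rw [evenS_eq h, evenSphereTwo]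
  ext v
  simp only [Set.mem_mul, Set.mem_insert_iff, Set.mem_singleton_iff, exists_eq_or_imp,
    exists_eq_left, r_mul_r, r_mul_sr, sr_mul_r, sr_mul_sr]
  ring_nf
  simp only [ZMod.neg_natCast_half h, ← one_def, eq_comm (b := v)]
  tauto

theorem nodup_rotation_offsets (hn : 6 ≤ n) : [(2 : ZMod n), m, -2, 0, 1, -1].Nodup := by
  have := List.Nodup.map_intCast_zmod (n := n) (l := [2, ((n / 2 : ℕ) : ℤ), -2, 0, 1, -1])
    (by simp only [List.nodup_cons, List.mem_cons, List.not_mem_nil, List.nodup_nil, or_false,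
      not_false_eq_true, and_true]; omega)
    (-2)
    (fun x hx => by simp only [List.mem_cons, List.not_mem_nil, or_false] at hx; omega)
  simpa [-Int.natCast_ediv] using this

theorem nodup_reflection_offsets (hn : 6 ≤ n) :
    [(0 : ZMod n), m, -2, m - 2, -1, m - 1].Nodup := by
  have := List.Nodup.map_intCast_zmod (n := n)
    (l := [0, ((n / 2 : ℕ) : ℤ), -2, ((n / 2 : ℕ) : ℤ) - 2, -1, ((n / 2 : ℕ) : ℤ) - 1])
    (by simp only [List.nodup_cons, List.mem_cons, List.not_mem_nil, List.nodup_nil, or_false,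
      not_false_eq_true, and_true]; omega)
    (-2)
    (fun x hx => by simp only [List.mem_cons, List.not_mem_nil, or_false] at hx; omega)
  simpa [-Int.natCast_ediv] using this

theorem disjoint_evenSphereTwo (hn : 6 ≤ n) (h : Even n) :
    Disjoint (evenSphereTwo n) (insert 1 (evenS n)) := by
  have hrot := nodup_rotation_offsets hn
  have hrefl := nodup_reflection_offsets hn
  simp only [List.nodup_cons, List.mem_cons, List.not_mem_nil, or_false, not_or] at hrot hrefl
  rw [evenS_eq h, evenSphereTwo, Set.disjoint_left]
  simp only [Set.mem_insert_iff, Set.mem_singleton_iff]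
  rintro v (rfl | rfl | rfl | rfl | rfl | rfl | rfl) <;> simp [hrot, hrefl]

theorem ncard_evenSphereTwo (hn : 6 ≤ n) : (evenSphereTwo n).ncard = 7 := by
  have hrot := nodup_rotation_offsets hn
  have hrefl := nodup_reflection_offsets hn
  simp only [List.nodup_cons, List.mem_cons, List.not_mem_nil, or_false, not_or] at hrot hrefl
  rw [evenSphereTwo, Set.ncard_eq_toFinset_card']
  simp [hrot, hrefl]

end EvenS

/-- Let `n ≥ 6` be even, `S = {a, a⁻¹, ab, a^{n/2+1}b}` and `Γ = Cay(D_{2n}, S)`.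
Then the set of vertices at distance exactly `2` from the identity is
`{a², b, a^{n/2}b, a^{n/2}, a²b, a^{n/2+2}b, a⁻²}`, which has exactly `7`
elements. -/
theorem cayley_dihedral_dist_two (n : ℕ) (hn : 6 ≤ n) (heven : Even n) :
    {v : DihedralGroup n | (cayleyGraph n (evenS n)).dist 1 v = 2} =
      ({DihedralGroup.r 2,
        DihedralGroup.sr 0,
        DihedralGroup.r ((n / 2 : ℕ) : ZMod n) * DihedralGroup.sr 0,
        DihedralGroup.r ((n / 2 : ℕ) : ZMod n),
        DihedralGroup.r 2 * DihedralGroup.sr 0,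
        DihedralGroup.r (((n / 2 : ℕ) : ZMod n) + 2) * DihedralGroup.sr 0,
        DihedralGroup.r (-2)} : Set (DihedralGroup n)) ∧
    {v : DihedralGroup n | (cayleyGraph n (evenS n)).dist 1 v = 2}.ncard = 7 := by
  have hsphere : {v | (cayleyGraph n (evenS n)).dist 1 v = 2} = evenSphereTwo n := by
    rw [setOf_cayleyGraph_dist_one_eq_two (fun _ => inv_mem_evenS) (one_notMem_evenS (by omega)),
      evenS_mul_evenS heven, Set.insert_sdiff_of_mem _ (Set.mem_insert _ _),
      (disjoint_evenSphereTwo hn heven).sdiff_eq_left]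
  refine ⟨?_, hsphere ▸ ncard_evenSphereTwo hn⟩
  simp only [hsphere, evenSphereTwo, r_mul_sr, zero_sub, neg_add, ZMod.neg_natCast_half heven,
    ← sub_eq_add_neg]
end

section
/- Let n ≥ 6 be even, S = {a, a^{-1}, ab, a^{n/2+1}b}, Γ = Cay(D_{2n}, S), and A = Aut(Γ). Then the stabilizer A_1 of the identity vertex acts faithfully on S, has order 4, and equals Aut(D_{2n}, S) = ⟨σ_{1,n/2}, σ_{-1,2}⟩; consequently R(D_{2n}) is normal in Aut(Γ). -/
open DihedralGroup

/-- The stabilizer `A₁` of the identity vertex in `A = Aut(Cay(D_{2n}, S))`. -/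
def vertexStab (n : ℕ) : Subgroup (Equiv.Perm (DihedralGroup n)) :=
  cayleyAut (DihedralGroup n) (evenS n) ⊓
    MulAction.stabilizer (Equiv.Perm (DihedralGroup n)) (1 : DihedralGroup n)

/-!
An automorphism `f` of `Γ` fixing `1` is rigid: if it fixes `a⁻¹` and the two reflections
`ab = sr (-1)`, `a^{n/2+1}b = sr (n/2 - 1)` of `S`, then it fixes every window
`r k, r (k+1), sr k, sr (k + n/2)`, because each vertex of the next window is the only unfixed
common neighbour of two fixed vertices. Moreover `f` permutes `S` and preserves the property
"has a partner in `S` whose only common neighbour with it is `1`", which holds for `a^{±1}` but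
fails for a reflection `s ∈ S` (conjugation by `s` preserves `S`, so `s t ≠ 1` is a common
neighbour of `s` and any other `t ∈ S`). So `f` is determined by `f (a⁻¹) ∈ {a, a⁻¹}` and
`f (ab) ∈ {ab, a^{n/2+1}b}`, and `1, φ, ψ, φψ` realise all four choices. Finally, once every
element of `A₁` is a group automorphism `σ`, any `f ∈ Aut(Γ)` is `x ↦ σ x * c` and
conjugates the right translation by `g` to the right translation by `c⁻¹ σ(g) c`.
-/

theorem ZMod.natCast_ne_zero_of_lt {n k : ℕ} (h0 : 0 < k) (hk : k < n) : (k : ZMod n) ≠ 0 := by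
  rw [Ne, ZMod.natCast_eq_zero_iff]
  exact Nat.not_dvd_of_pos_of_lt h0 hk

open Pointwise

section CayleyGraph

variable {G : Type*} [Group G] {S : Set G} {f : Equiv.Perm G}

theorem rightRegHom_mem_cayleyAut (g : G) : rightRegHom G g ∈ cayleyAut G S := by
  intro x y
  show y * x⁻¹ ∈ S ↔ y * g⁻¹ * (x * g⁻¹)⁻¹ ∈ S
  rw [show y * g⁻¹ * (x * g⁻¹)⁻¹ = y * x⁻¹ by group]

theorem toPerm_mem_cayleyAut {σ : MulAut G} (hσ : σ ∈ MulAction.stabilizer (MulAut G) S) :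
    MulAut.toPerm G σ ∈ cayleyAut G S := by
  intro x y
  show y * x⁻¹ ∈ S ↔ σ y * (σ x)⁻¹ ∈ S
  rw [← map_inv, ← map_mul]
  exact (MulAction.mem_stabilizer_set.mp hσ _).symm

theorem apply_mem_iff_of_mem_cayleyAut (hf : f ∈ cayleyAut G S) (h1 : f 1 = 1) {s : G} :
    f s ∈ S ↔ s ∈ S := by
  simpa [h1] using (hf 1 s).symm

theorem apply_mul_inv_mem_iff_of_mem_cayleyAut (hf : f ∈ cayleyAut G S) {u : G} (hu : f u = u)
    {y : G} : f y * u⁻¹ ∈ S ↔ y * u⁻¹ ∈ S := by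
  have h := hf u y
  rw [hu] at h
  exact h.symm

theorem apply_eq_self_of_adj (hf : f ∈ cayleyAut G S) {u w b : G} (hu : f u = u) (hw : f w = w)
    (hbu : b * u⁻¹ ∈ S) (hbw : b * w⁻¹ ∈ S)
    (h : ∀ y, y * u⁻¹ ∈ S → y * w⁻¹ ∈ S → y = b ∨ f y = y) : f b = b := by
  rcases h (f b) ((apply_mul_inv_mem_iff_of_mem_cayleyAut hf hu).2 hbu)
      ((apply_mul_inv_mem_iff_of_mem_cayleyAut hf hw).2 hbw) with hb | hb
  · exact hb
  · exact f.injective hb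

def HasThinPartner (S : Set G) (s : G) : Prop :=
  ∃ t ∈ S, t ≠ s ∧ ∀ w, w * s⁻¹ ∈ S → w * t⁻¹ ∈ S → w = 1

theorem HasThinPartner.apply (hf : f ∈ cayleyAut G S) (h1 : f 1 = 1) {s : G}
    (hs : HasThinPartner S s) : HasThinPartner S (f s) := by
  obtain ⟨t, ht, hts, hw⟩ := hs
  refine ⟨f t, (apply_mem_iff_of_mem_cayleyAut hf h1).2 ht, f.injective.ne hts,
    fun w hws hwt => ?_⟩
  have hw1 : f.symm w = 1 :=
    hw _ ((hf s _).2 (by simpa using hws)) ((hf t _).2 (by simpa using hwt))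
  rw [← f.apply_symm_apply w, hw1, h1]

theorem hasThinPartner_apply_iff (hf : f ∈ cayleyAut G S) (h1 : f 1 = 1) {s : G} :
    HasThinPartner S (f s) ↔ HasThinPartner S s := by
  refine ⟨fun h => ?_, HasThinPartner.apply hf h1⟩
  have h1' : f⁻¹ 1 = 1 := by rw [Equiv.Perm.inv_eq_iff_eq, h1]
  simpa using h.apply (inv_mem hf) h1'

theorem not_hasThinPartner_of_conj {s : G} (hs : s ∈ S) (hinv : s⁻¹ = s)
    (hconj : ∀ t ∈ S, s * t * s⁻¹ ∈ S) : ¬HasThinPartner S s := by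
  rintro ⟨t, ht, hts, hw⟩
  have hst : s * t = 1 := hw _ (hconj t ht) (by simpa [mul_assoc] using hs)
  exact hts (by rw [← hinv]; exact eq_inv_of_mul_eq_one_right hst)

theorem conj_mem_rightRegRep_of_stab_aut
    (hstab : ∀ f ∈ cayleyAut G S, f 1 = 1 → ∃ σ : MulAut G, ∀ x, f x = σ x)
    (hf : f ∈ cayleyAut G S) {p : Equiv.Perm G} (hp : p ∈ rightRegRep G) :
    f * p * f⁻¹ ∈ rightRegRep G := by
  obtain ⟨g, rfl⟩ := hp
  set c := f 1
  obtain ⟨σ, hσ⟩ := hstab (rightRegHom G c * f) (mul_mem (rightRegHom_mem_cayleyAut c) hf)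
    (by simp [rightRegHom, c])
  have hfσ : ∀ x, f x = σ x * c := fun x => by
    simpa [rightRegHom] using congrArg (· * c) (hσ x)
  refine ⟨c⁻¹ * σ g * c, ?_⟩
  rw [eq_comm, mul_inv_eq_iff_eq_mul]
  ext x
  simp [rightRegHom, hfσ, map_mul, map_inv, mul_assoc]

end CayleyGraph

section EvenDihedral

variable {n : ℕ}

local notation "M" => ((n / 2 : ℕ) : ZMod n)

theorem sr_eq_r_mul_sr_zero (j : ZMod n) : sr j = r (-j) * sr 0 := by simp

theorem half_add_half (heven : Even n) : M + M = 0 := by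
  rw [← Nat.cast_add, ← two_mul, Nat.mul_div_cancel' heven.two_dvd, ZMod.natCast_self]

theorem four_ne_zero_and_half_ne_zero (hn : 6 ≤ n) : (4 : ZMod n) ≠ 0 ∧ M ≠ 0 :=
  ⟨by exact_mod_cast ZMod.natCast_ne_zero_of_lt (k := 4) (by omega) (by omega),
    ZMod.natCast_ne_zero_of_lt (by omega) (by omega)⟩

theorem mem_evenS_iff (heven : Even n) {x : DihedralGroup n} :
    x ∈ evenS n ↔ x = r 1 ∨ x = r (-1) ∨ x = sr (-1) ∨ x = sr (M - 1) := by
  have h := half_add_half heven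
  have e : M + 1 = -(M - 1) := by grind
  simp [evenS, r_mul_sr, e]

theorem mul_inv_r_mem_evenS_iff (heven : Even n) {i : ZMod n} {y : DihedralGroup n} :
    y * (r i)⁻¹ ∈ evenS n ↔
      y = r (i + 1) ∨ y = r (i - 1) ∨ y = sr (i - 1) ∨ y = sr (i + M - 1) := by
  have h := half_add_half heven
  rcases y with j | j <;> simp [mem_evenS_iff heven] <;> grind

theorem mul_inv_sr_mem_evenS_iff (heven : Even n) {j : ZMod n} {y : DihedralGroup n} :
    y * (sr j)⁻¹ ∈ evenS n ↔
      y = sr (j - 1) ∨ y = sr (j + 1) ∨ y = r (j + 1) ∨ y = r (j + 1 + M) := by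
  have h := half_add_half heven
  rcases y with i | i <;> simp [mem_evenS_iff heven] <;> grind

def FixesWindow (f : Equiv.Perm (DihedralGroup n)) (k : ZMod n) : Prop :=
  f (r k) = r k ∧ f (r (k + 1)) = r (k + 1) ∧ f (sr k) = sr k ∧ f (sr (k + M)) = sr (k + M)

theorem FixesWindow.succ (hn : 6 ≤ n) (heven : Even n) {f : Equiv.Perm (DihedralGroup n)}
    (hf : f ∈ cayleyAut (DihedralGroup n) (evenS n)) {k : ZMod n} (hk : FixesWindow f k) :
    FixesWindow f (k + 1) := by
  obtain ⟨h0, h1, hs, hsM⟩ := hk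
  have hMM := half_add_half heven
  obtain ⟨h4, hM0⟩ := four_ne_zero_and_half_ne_zero hn
  have h2 : f (r (k + 1 + 1)) = r (k + 1 + 1) :=
    apply_eq_self_of_adj hf h1 h1 (by rw [mul_inv_r_mem_evenS_iff heven]; grind)
      (by rw [mul_inv_r_mem_evenS_iff heven]; grind) fun y hy _ => by
        rw [mul_inv_r_mem_evenS_iff heven] at hy
        grind
  refine ⟨h1, h2, ?_, ?_⟩
  · refine apply_eq_self_of_adj hf hs h2 ?_ ?_ fun y hy hy' => ?_
    · rw [mul_inv_sr_mem_evenS_iff heven]; grind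
    · rw [mul_inv_r_mem_evenS_iff heven]; grind
    · rw [mul_inv_sr_mem_evenS_iff heven] at hy
      rw [mul_inv_r_mem_evenS_iff heven] at hy'
      grind
  · refine apply_eq_self_of_adj hf hsM h2 ?_ ?_ fun y hy hy' => ?_
    · rw [mul_inv_sr_mem_evenS_iff heven]; grind
    · rw [mul_inv_r_mem_evenS_iff heven]; grind
    · rw [mul_inv_sr_mem_evenS_iff heven] at hy
      rw [mul_inv_r_mem_evenS_iff heven] at hy'
      grind

theorem mem_vertexStab_iff {f : Equiv.Perm (DihedralGroup n)} :
    f ∈ vertexStab n ↔ f ∈ cayleyAut (DihedralGroup n) (evenS n) ∧ f 1 = 1 :=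
  Subgroup.mem_inf

theorem eq_one_of_fix (hn : 6 ≤ n) (heven : Even n) {f : Equiv.Perm (DihedralGroup n)}
    (hf : f ∈ vertexStab n) (ha : f (r (-1)) = r (-1)) (hb : f (sr (-1)) = sr (-1))
    (hb' : f (sr (M - 1)) = sr (M - 1)) : f = 1 := by
  obtain ⟨hf, h1⟩ := mem_vertexStab_iff.1 hf
  have hwindow : ∀ j : ℕ, FixesWindow f (-1 + j) := by
    intro j
    induction j with
    | zero => simpa [FixesWindow, neg_add_eq_sub] using ⟨ha, h1, hb, hb'⟩
    | succ j ih => simpa [add_assoc] using ih.succ hn heven hf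
  have : NeZero n := ⟨by omega⟩
  have hall : ∀ k, FixesWindow f k := fun k => by simpa using hwindow (k + 1).val
  ext x
  rcases x with i | i
  · exact (hall i).1
  · exact (hall i).2.2.1

theorem hasThinPartner_r (hn : 6 ≤ n) (heven : Even n) {i : ZMod n} (hi : i = 1 ∨ i = -1) :
    HasThinPartner (evenS n) (r i) := by
  have hMM := half_add_half heven
  obtain ⟨h4, hM0⟩ := four_ne_zero_and_half_ne_zero hn
  refine ⟨r (-i), (mem_evenS_iff heven).2 (by grind), by grind, fun w h h' => ?_⟩
  rw [mul_inv_r_mem_evenS_iff heven] at h h'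
  rw [one_def]
  rcases hi with rfl | rfl <;> rcases h with rfl | rfl | rfl | rfl <;> simp at h' ⊢ <;> grind

theorem sr_mul_mul_sr_mem_evenS (heven : Even n) {j : ZMod n} (hj : sr j ∈ evenS n)
    {t : DihedralGroup n} (ht : t ∈ evenS n) : sr j * t * (sr j)⁻¹ ∈ evenS n := by
  have hMM := half_add_half heven
  rw [mem_evenS_iff heven] at hj ht ⊢
  rcases ht with rfl | rfl | rfl | rfl <;> simp <;> grind

theorem hasThinPartner_iff (hn : 6 ≤ n) (heven : Even n) {s : DihedralGroup n}
    (hs : s ∈ evenS n) : HasThinPartner (evenS n) s ↔ ∃ i, s = r i := by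
  refine ⟨fun h => ?_, ?_⟩
  · rcases s with i | j
    · exact ⟨i, rfl⟩
    · exact absurd h (not_hasThinPartner_of_conj hs (inv_sr j)
        fun t ht => sr_mul_mul_sr_mem_evenS heven hs ht)
  · rintro ⟨i, rfl⟩
    exact hasThinPartner_r hn heven (by simpa [mem_evenS_iff heven] using hs)

theorem toPerm_mem_vertexStab {σ : MulAut (DihedralGroup n)}
    (hσ : σ ∈ MulAction.stabilizer (MulAut (DihedralGroup n)) (evenS n)) :
    MulAut.toPerm (DihedralGroup n) σ ∈ vertexStab n :=
  mem_vertexStab_iff.2 ⟨toPerm_mem_cayleyAut hσ, map_one σ⟩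

theorem exists_apply_eq_r_iff (hn : 6 ≤ n) (heven : Even n) {f : Equiv.Perm (DihedralGroup n)}
    (hf : f ∈ vertexStab n) {s : DihedralGroup n} (hs : s ∈ evenS n) :
    (∃ i, f s = r i) ↔ ∃ i, s = r i := by
  obtain ⟨hf, h1⟩ := mem_vertexStab_iff.1 hf
  rw [← hasThinPartner_iff hn heven hs,
    ← hasThinPartner_iff hn heven ((apply_mem_iff_of_mem_cayleyAut hf h1).2 hs),
    hasThinPartner_apply_iff hf h1]

theorem apply_r_neg_one_eq_or (hn : 6 ≤ n) (heven : Even n) {f : Equiv.Perm (DihedralGroup n)}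
    (hf : f ∈ vertexStab n) : f (r (-1)) = r (-1) ∨ f (r (-1)) = r 1 := by
  have hs : r (-1) ∈ evenS n := (mem_evenS_iff heven).2 (by simp)
  obtain ⟨i, hi⟩ := (exists_apply_eq_r_iff hn heven hf hs).2 ⟨-1, rfl⟩
  have hfs := (apply_mem_iff_of_mem_cayleyAut (mem_vertexStab_iff.1 hf).1
    (mem_vertexStab_iff.1 hf).2).2 hs
  rw [mem_evenS_iff heven, hi] at hfs
  rw [hi]
  simp only [r.injEq, reduceCtorEq, or_false] at hfs ⊢
  tauto

theorem apply_sr_eq_or (hn : 6 ≤ n) (heven : Even n) {f : Equiv.Perm (DihedralGroup n)}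
    (hf : f ∈ vertexStab n) {j : ZMod n} (hj : sr j ∈ evenS n) :
    f (sr j) = sr (-1) ∨ f (sr j) = sr (M - 1) := by
  have hnot : ¬∃ i, f (sr j) = r i := by
    rw [exists_apply_eq_r_iff hn heven hf hj]; simp
  have hfs := (apply_mem_iff_of_mem_cayleyAut (mem_vertexStab_iff.1 hf).1
    (mem_vertexStab_iff.1 hf).2).2 hj
  rw [mem_evenS_iff heven] at hfs
  rcases hfs with h | h | h | h
  exacts [absurd ⟨_, h⟩ hnot, absurd ⟨_, h⟩ hnot, Or.inl h, Or.inr h]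

theorem eq_of_apply_eq (hn : 6 ≤ n) (heven : Even n) {f g : Equiv.Perm (DihedralGroup n)}
    (hf : f ∈ vertexStab n) (hg : g ∈ vertexStab n) (ha : f (r (-1)) = g (r (-1)))
    (hb : f (sr (-1)) = g (sr (-1))) : f = g := by
  have hgf : g⁻¹ * f ∈ vertexStab n := mul_mem (inv_mem hg) hf
  have ha' : (g⁻¹ * f) (r (-1)) = r (-1) := by simp [ha]
  have hb' : (g⁻¹ * f) (sr (-1)) = sr (-1) := by simp [hb]
  have hM := half_add_half heven
  have hM0 := (four_ne_zero_and_half_ne_zero hn).2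
  have hb'' : (g⁻¹ * f) (sr (M - 1)) = sr (M - 1) := by
    rcases apply_sr_eq_or hn heven hgf (j := M - 1) ((mem_evenS_iff heven).2 (by simp)) with h | h
    · have := (g⁻¹ * f).injective (h.trans hb'.symm)
      exact absurd (by simpa using this) hM0
    · exact h
  exact (inv_mul_eq_one.1 (eq_one_of_fix hn heven hgf ha' hb' hb'')).symm

section Automorphisms

variable {φ ψ : MulAut (DihedralGroup n)}

theorem phi_apply_sr (hφs : ∀ j : ZMod n, φ (r j * sr 0) = r (j + M) * sr 0) (j : ZMod n) :
    φ (sr j) = sr (j - M) := by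
  rw [sr_eq_r_mul_sr_zero, hφs, r_mul_sr]
  congr 1
  ring

theorem psi_apply_sr (hψs : ∀ j : ZMod n, ψ (r j * sr 0) = r (-j + 2) * sr 0) (j : ZMod n) :
    ψ (sr j) = sr (-j - 2) := by
  rw [sr_eq_r_mul_sr_zero, hψs, r_mul_sr]
  congr 1
  ring

theorem phi_mem_stabilizer (heven : Even n) (hφr : ∀ i : ZMod n, φ (r i) = r i)
    (hφs : ∀ j : ZMod n, φ (r j * sr 0) = r (j + M) * sr 0) :
    φ ∈ MulAction.stabilizer (MulAut (DihedralGroup n)) (evenS n) := by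
  have hM := half_add_half heven
  rw [MulAction.mem_stabilizer_set]
  rintro (i | j)
  · simp [hφr]
  · simp [phi_apply_sr hφs, mem_evenS_iff heven]; grind

theorem psi_mem_stabilizer (heven : Even n) (hψr : ∀ i : ZMod n, ψ (r i) = r (-i))
    (hψs : ∀ j : ZMod n, ψ (r j * sr 0) = r (-j + 2) * sr 0) :
    ψ ∈ MulAction.stabilizer (MulAut (DihedralGroup n)) (evenS n) := by
  have hM := half_add_half heven
  rw [MulAction.mem_stabilizer_set]
  rintro (i | j) <;> simp [hψr, psi_apply_sr hψs, mem_evenS_iff heven] <;> grind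

theorem exists_mem_closure_apply_eq (heven : Even n) (hφr : ∀ i : ZMod n, φ (r i) = r i)
    (hφs : ∀ j : ZMod n, φ (r j * sr 0) = r (j + M) * sr 0)
    (hψr : ∀ i : ZMod n, ψ (r i) = r (-i))
    (hψs : ∀ j : ZMod n, ψ (r j * sr 0) = r (-j + 2) * sr 0) {a b : DihedralGroup n}
    (ha : a = r (-1) ∨ a = r 1) (hb : b = sr (-1) ∨ b = sr (M - 1)) :
    ∃ σ ∈ Subgroup.closure {φ, ψ}, σ (r (-1)) = a ∧ σ (sr (-1)) = b := by
  have hM := half_add_half heven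
  have hφ : φ ∈ Subgroup.closure {φ, ψ} := Subgroup.subset_closure (by simp)
  have hψ : ψ ∈ Subgroup.closure {φ, ψ} := Subgroup.subset_closure (by simp)
  have hφsr : φ (sr (-1)) = sr (M - 1) := by rw [phi_apply_sr hφs]; grind
  have hψsr : ψ (sr (-1)) = sr (-1) := by rw [psi_apply_sr hψs]; grind
  rcases ha with rfl | rfl <;> rcases hb with rfl | rfl
  · exact ⟨1, one_mem _, rfl, rfl⟩
  · exact ⟨φ, hφ, hφr _, hφsr⟩
  · exact ⟨ψ, hψ, by simp [hψr], hψsr⟩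
  · exact ⟨φ * ψ, mul_mem hφ hψ, by simp [hψr, hφr], by simp [hψsr, hφsr]⟩

theorem closure_le_stabilizer (heven : Even n) (hφr : ∀ i : ZMod n, φ (r i) = r i)
    (hφs : ∀ j : ZMod n, φ (r j * sr 0) = r (j + M) * sr 0)
    (hψr : ∀ i : ZMod n, ψ (r i) = r (-i))
    (hψs : ∀ j : ZMod n, ψ (r j * sr 0) = r (-j + 2) * sr 0) :
    Subgroup.closure {φ, ψ} ≤ MulAction.stabilizer (MulAut (DihedralGroup n)) (evenS n) :=
  (Subgroup.closure_le _).2 (Set.pair_subset (phi_mem_stabilizer heven hφr hφs)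
    (psi_mem_stabilizer heven hψr hψs))

theorem vertexStab_eq_map_closure (hn : 6 ≤ n) (heven : Even n)
    (hφr : ∀ i : ZMod n, φ (r i) = r i)
    (hφs : ∀ j : ZMod n, φ (r j * sr 0) = r (j + M) * sr 0)
    (hψr : ∀ i : ZMod n, ψ (r i) = r (-i))
    (hψs : ∀ j : ZMod n, ψ (r j * sr 0) = r (-j + 2) * sr 0) :
    vertexStab n = (Subgroup.closure {φ, ψ}).map (MulAut.toPerm (DihedralGroup n)) := by
  have hclosure := closure_le_stabilizer heven hφr hφs hψr hψs
  refine le_antisymm (fun f hf => ?_) (Subgroup.map_le_iff_le_comap.2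
    fun σ hσ => toPerm_mem_vertexStab (hclosure hσ))
  obtain ⟨σ, hσ, ha, hb⟩ := exists_mem_closure_apply_eq heven hφr hφs hψr hψs
    (apply_r_neg_one_eq_or hn heven hf)
    (apply_sr_eq_or hn heven hf (j := -1) ((mem_evenS_iff heven).2 (by simp)))
  exact ⟨σ, hσ, eq_of_apply_eq hn heven (toPerm_mem_vertexStab (hclosure hσ)) hf ha hb⟩

theorem card_vertexStab (hn : 6 ≤ n) (heven : Even n)
    (hφr : ∀ i : ZMod n, φ (r i) = r i)
    (hφs : ∀ j : ZMod n, φ (r j * sr 0) = r (j + M) * sr 0)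
    (hψr : ∀ i : ZMod n, ψ (r i) = r (-i))
    (hψs : ∀ j : ZMod n, ψ (r j * sr 0) = r (-j + 2) * sr 0) :
    Nat.card (vertexStab n) = 4 := by
  have hM := half_add_half heven
  obtain ⟨h4, hM0⟩ := four_ne_zero_and_half_ne_zero hn
  set ev : Equiv.Perm (DihedralGroup n) → DihedralGroup n × DihedralGroup n :=
    fun f => (f (r (-1)), f (sr (-1)))
  have hinj : Set.InjOn ev (vertexStab n) := fun f hf g hg h =>
    eq_of_apply_eq hn heven hf hg (congrArg Prod.fst h) (congrArg Prod.snd h)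
  have himage : ev '' vertexStab n = {r (-1), r 1} ×ˢ {sr (-1), sr (M - 1)} := by
    refine Set.Subset.antisymm ?_ fun ⟨a, b⟩ ⟨ha, hb⟩ => ?_
    · rintro _ ⟨f, hf, rfl⟩
      exact ⟨apply_r_neg_one_eq_or hn heven hf,
        apply_sr_eq_or hn heven hf (j := -1) ((mem_evenS_iff heven).2 (by simp))⟩
    · obtain ⟨σ, hσ, hσa, hσb⟩ :=
        exists_mem_closure_apply_eq heven hφr hφs hψr hψs ha hb
      refine ⟨MulAut.toPerm _ σ, ?_, Prod.ext hσa hσb⟩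
      rw [vertexStab_eq_map_closure hn heven hφr hφs hψr hψs]
      exact ⟨σ, hσ, rfl⟩
  rw [← SetLike.coe_sort_coe, Nat.card_coe_set_eq, ← hinj.ncard_image, himage,
    Set.ncard_prod, Set.ncard_pair, Set.ncard_pair]
  · simp only [ne_eq, sr.injEq]; grind
  · simp only [ne_eq, r.injEq]; grind

theorem mem_vertexStab_iff_exists_mulAut (hn : 6 ≤ n) (heven : Even n)
    (hφr : ∀ i : ZMod n, φ (r i) = r i)
    (hφs : ∀ j : ZMod n, φ (r j * sr 0) = r (j + M) * sr 0)
    (hψr : ∀ i : ZMod n, ψ (r i) = r (-i))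
    (hψs : ∀ j : ZMod n, ψ (r j * sr 0) = r (-j + 2) * sr 0)
    (f : Equiv.Perm (DihedralGroup n)) :
    f ∈ vertexStab n ↔
      ∃ σ : MulAut (DihedralGroup n), ⇑σ '' evenS n = evenS n ∧ ∀ x, f x = σ x := by
  refine ⟨fun hf => ?_, fun ⟨σ, hσ, hfσ⟩ => ?_⟩
  · rw [vertexStab_eq_map_closure hn heven hφr hφs hψr hψs] at hf
    obtain ⟨σ, hσ, rfl⟩ := hf
    exact ⟨σ, closure_le_stabilizer heven hφr hφs hψr hψs hσ, fun _ => rfl⟩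
  · rw [show f = MulAut.toPerm _ σ from Equiv.ext hfσ]
    exact toPerm_mem_vertexStab hσ

end Automorphisms

end EvenDihedral

/-- Let `n ≥ 6` be even, `S = {a, a⁻¹, ab, a^{n/2+1}b}`, `Γ = Cay(D_{2n}, S)` and
`A = Aut(Γ)`. Then the stabilizer `A₁` of the identity vertex acts faithfully on
`S`, has order `4`, and equals `Aut(D_{2n}, S) = ⟨σ_{1,n/2}, σ_{-1,2}⟩`;
consequently `R(D_{2n})` is normal in `Aut(Γ)`. -/
theorem cayley_dihedral_even_normal (n : ℕ) (hn : 6 ≤ n) (heven : Even n)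
    (φ ψ : MulAut (DihedralGroup n))
    (hφr : ∀ i : ZMod n, φ (DihedralGroup.r i) = DihedralGroup.r i)
    (hφs : ∀ j : ZMod n, φ (DihedralGroup.r j * DihedralGroup.sr 0) =
      DihedralGroup.r (j + ((n / 2 : ℕ) : ZMod n)) * DihedralGroup.sr 0)
    (hψr : ∀ i : ZMod n, ψ (DihedralGroup.r i) = DihedralGroup.r (-i))
    (hψs : ∀ j : ZMod n, ψ (DihedralGroup.r j * DihedralGroup.sr 0) =
      DihedralGroup.r (-j + 2) * DihedralGroup.sr 0) :
    (∀ f ∈ vertexStab n, (∀ s ∈ evenS n, f s = s) → f = 1) ∧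
    Nat.card (vertexStab n) = 4 ∧
    (∀ f : Equiv.Perm (DihedralGroup n), f ∈ vertexStab n ↔
      ∃ σ : MulAut (DihedralGroup n), ⇑σ '' evenS n = evenS n ∧ ∀ x, f x = σ x) ∧
    (∀ f : Equiv.Perm (DihedralGroup n), f ∈ vertexStab n ↔
      f ∈ Subgroup.closure {MulAut.toPerm (DihedralGroup n) φ, MulAut.toPerm (DihedralGroup n) ψ}) ∧
    (∀ f ∈ cayleyAut (DihedralGroup n) (evenS n), ∀ p ∈ rightRegRep (DihedralGroup n),
      f * p * f⁻¹ ∈ rightRegRep (DihedralGroup n)) := by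
  have hS : ∀ s, s = r (-1) ∨ s = sr (-1) ∨ s = sr (((n / 2 : ℕ) : ZMod n) - 1) → s ∈ evenS n :=
    fun s hs => (mem_evenS_iff heven).2 (by tauto)
  have haut := mem_vertexStab_iff_exists_mulAut hn heven hφr hφs hψr hψs
  refine ⟨fun f hf hfix => ?_, card_vertexStab hn heven hφr hφs hψr hψs, haut, fun f => ?_,
    fun f hf p hp => ?_⟩
  · exact eq_one_of_fix hn heven hf (hfix _ (hS _ (by simp))) (hfix _ (hS _ (by simp)))
      (hfix _ (hS _ (by simp)))
  · rw [vertexStab_eq_map_closure hn heven hφr hφs hψr hψs, MonoidHom.map_closure,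
      Set.image_pair]
  · refine conj_mem_rightRegRep_of_stab_aut (fun g hg hg1 => ?_) hf hp
    obtain ⟨σ, -, hσ⟩ := (haut g).1 (mem_vertexStab_iff.2 ⟨hg, hg1⟩)
    exact ⟨σ, hσ⟩
end
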